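/- arXiv:2310.07003 — 4 statements merged into one kernel-verified Lean document; each statement's English description precedes it below -/
import Mathlib

section
/- Let τ be an almost surely finite stopping time with P(τ > 0) = 1 whose compensator A has continuous paths. Then the random variable A_τ is exponentially distributed with parameter 1; that is, for every t ≥ 0, P(A_τ ≤ t) = 1 − e^{−t}. -/
open MeasureTheory ProbabilityTheory Filter Set
open scoped NNReal ENNReal Topology

lemma mart_incr_orth {Ω : Type*} {m0 : MeasurableSpace Ω} {P : Measure Ω}
    [IsProbabilityMeasure P] {F : Filtration ℝ≥0 m0} {M : ℝ≥0 → Ω → ℝ}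
    (hM : Martingale M F P) {s t : ℝ≥0} (hst : s ≤ t) {Y : Ω → ℝ}
    (hY : StronglyMeasurable[F s] Y) {C : ℝ} (hbd : ∀ ω, ‖Y ω‖ ≤ C) :
    ∫ ω, Y ω * (M t ω - M s ω) ∂P = 0 := by
  have hYae : AEStronglyMeasurable Y P :=
    (hY.mono (F.le s)).aestronglyMeasurable
  have hint : ∀ u : ℝ≥0, Integrable (fun ω => Y ω * M u ω) P := fun u =>
    (hM.integrable u).bdd_mul hYae (ae_of_all _ hbd)
  have key : ∫ ω, Y ω * M t ω ∂P = ∫ ω, Y ω * M s ω ∂P := by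
    have h1 : P[fun ω => Y ω * M t ω | F s] =ᵐ[P] fun ω => Y ω * (P[M t | F s]) ω :=
      condExp_mul_of_stronglyMeasurable_left hY (hint t) (hM.integrable t)
    have h2 : P[M t | F s] =ᵐ[P] M s := hM.condExp_ae_eq hst
    have h3 : P[fun ω => Y ω * M t ω | F s] =ᵐ[P] fun ω => Y ω * M s ω := by
      filter_upwards [h1, h2] with ω h1ω h2ω
      rw [h1ω, h2ω]
    calc ∫ ω, Y ω * M t ω ∂P = ∫ ω, (P[fun ω => Y ω * M t ω | F s]) ω ∂P :=
          (integral_condExp (F.le s)).symm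
      _ = ∫ ω, Y ω * M s ω ∂P := integral_congr_ae h3
  have : ∫ ω, Y ω * (M t ω - M s ω) ∂P
      = ∫ ω, Y ω * M t ω ∂P - ∫ ω, Y ω * M s ω ∂P := by
    simp_rw [mul_sub]
    exact integral_sub (hint t) (hint s)
  rw [this, key, sub_self]

lemma riemann_sum_tendsto (φ : ℝ → ℝ) (hφ : Continuous φ)
    (B : ℝ≥0 → ℝ) (hBc : Continuous B) (hBm : Monotone B) (hB0 : B 0 = 0)
    (T : ℝ≥0) (hconst : ∀ t, T ≤ t → B t = B T) :
    Tendsto (fun n : ℕ => ∑ i ∈ Finset.range (n * n),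
        φ (B ((i : ℝ≥0) / (n : ℝ≥0))) *
          (B (((i : ℝ≥0) + 1) / (n : ℝ≥0)) - B ((i : ℝ≥0) / (n : ℝ≥0))))
      atTop (𝓝 (∫ u in (0:ℝ)..(B T), φ u)) := by
  set L : ℝ := B T with hL
  set Φ : ℝ → ℝ := fun x => ∫ u in (0:ℝ)..x, φ u with hΦ
  have hL0 : 0 ≤ L := hB0 ▸ hBm (zero_le (a := T))
  have hBle : ∀ x, B x ≤ L := by
    intro x
    rcases le_total x T with h | h
    · exact hBm h
    · exact (hconst x h).le
  have hB0le : ∀ x, 0 ≤ B x := fun x => hB0 ▸ hBm (zero_le (a := x))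
  -- uniform continuity of φ on [0, L]
  rw [Metric.tendsto_atTop]
  intro ε hε
  set ε₁ : ℝ := ε / (2 * (L + 1)) with hε₁def
  have hε₁ : 0 < ε₁ := div_pos hε (by linarith)
  obtain ⟨δ, hδ, hUCφ⟩ := (Metric.uniformContinuousOn_iff_le.1
    ((isCompact_Icc (a := (0:ℝ)) (b := L)).uniformContinuousOn_of_continuous
      hφ.continuousOn)) ε₁ hε₁
  obtain ⟨η, hη, hUCB⟩ := (Metric.uniformContinuousOn_iff_le.1
    ((isCompact_Icc (a := (0:ℝ≥0)) (b := T + 1)).uniformContinuousOn_of_continuous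
      hBc.continuousOn)) δ hδ
  obtain ⟨N₀, hN₀⟩ := exists_nat_gt (max (T : ℝ) (1 / η))
  refine ⟨max N₀ 1, fun n hn => ?_⟩
  have hn1 : 1 ≤ n := le_trans (le_max_right _ _) hn
  have hnN₀ : (N₀ : ℝ) ≤ n := Nat.cast_le.2 (le_trans (le_max_left _ _) hn)
  have hnT : (T : ℝ) < n := lt_of_le_of_lt (le_max_left _ _) (lt_of_lt_of_le hN₀ hnN₀)
  have hnη : 1 / η ≤ (n : ℝ) := le_trans (le_max_right _ _) (le_of_lt (lt_of_lt_of_le hN₀ hnN₀))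
  have hnpos : (0:ℝ) < n := by exact_mod_cast hn1
  
  have hnne : (n : ℝ≥0) ≠ 0 := by
    simp only [ne_eq, Nat.cast_eq_zero]; omega
  have hnpos' : (0 : ℝ≥0) < (n : ℝ≥0) := zero_lt_iff.mpr hnne
  set c : ℕ → ℝ≥0 := fun i => (i : ℝ≥0) / (n : ℝ≥0) with hc
  set b : ℕ → ℝ := fun i => B (c i) with hb
  set g : ℕ → ℝ := fun i => Φ (B (c i)) with hg
  have hcoe : ∀ i : ℕ, ((c i : ℝ≥0) : ℝ) = (i : ℝ) / (n : ℝ) := by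
    intro i; simp [hc, NNReal.coe_div]
  have hcmono : Monotone c := fun i j hij => by
    exact (div_le_div_iff_of_pos_right hnpos').2 (by exact_mod_cast hij)
  have hbmono : Monotone b := fun i j hij => hBm (hcmono hij)
  have hcnn : c (n * n) = (n : ℝ≥0) := by
    simp only [hc]
    push_cast
    rw [mul_div_assoc, div_self hnne, mul_one]
  have hbtop : b (n * n) = L := by
    rw [hb]; simp only [hcnn]
    exact hconst _ (by exact_mod_cast hnT.le)
  have hb0' : b 0 = 0 := by simp [hb, hc, hB0]
  -- mesh control
  have hmesh : ∀ i : ℕ, b (i + 1) - b i ≤ δ := by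
    intro i
    rcases le_or_gt T (c i) with hT | hT
    · have h1 : B (c i) = L := hconst _ hT
      have h2 : B (c (i + 1)) = L := hconst _ (le_trans hT (hcmono (Nat.le_succ i)))
      simp only [hb, h1, h2, sub_self]
      exact hδ.le
    · have hci1 : c (i + 1) ≤ T + 1 := by
        have h1n : (1 : ℝ≥0) / (n : ℝ≥0) ≤ 1 := by
          rw [div_le_one hnpos']
          exact_mod_cast hn1
        have : c (i + 1) = c i + 1 / (n : ℝ≥0) := by
          simp only [hc]; push_cast; rw [add_div]
        rw [this]
        exact add_le_add hT.le h1n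
      have hmem1 : c i ∈ Icc (0 : ℝ≥0) (T + 1) :=
        ⟨zero_le, le_trans (hcmono (Nat.le_succ i)) hci1⟩
      have hmem2 : c (i + 1) ∈ Icc (0 : ℝ≥0) (T + 1) := ⟨zero_le, hci1⟩
      have hdist : dist (c i) (c (i + 1)) ≤ η := by
        rw [NNReal.dist_eq, hcoe, hcoe]
        push_cast
        rw [abs_of_nonpos (by
          apply sub_nonpos.2
          gcongr
          linarith)]
        have : -((i : ℝ) / n - (i + 1) / n) = 1 / n := by ring
        rw [this]
        rw [div_le_iff₀ hnpos]
        calc (1:ℝ) = η * (1 / η) := by field_simp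
          _ ≤ η * n := by
              apply mul_le_mul_of_nonneg_left hnη hη.le
      have := hUCB _ hmem1 _ hmem2 hdist
      rw [Real.dist_eq] at this
      calc b (i + 1) - b i ≤ |b i - b (i + 1)| := by
            rw [abs_sub_comm]; exact le_abs_self _
        _ ≤ δ := this
  -- per-term estimate
  have hterm : ∀ i : ℕ,
      |φ (b i) * (b (i + 1) - b i) - (g (i + 1) - g i)| ≤ ε₁ * (b (i + 1) - b i) := by
    intro i
    set a₀ : ℝ := b i with ha₀
    set b₀ : ℝ := b (i + 1) with hb₀
    have hab : a₀ ≤ b₀ := hbmono (Nat.le_succ i)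
    have haI : a₀ ∈ Icc (0:ℝ) L := ⟨hB0le _, hBle _⟩
    have hbI : b₀ ∈ Icc (0:ℝ) L := ⟨hB0le _, hBle _⟩
    have hΦdiff : g (i + 1) - g i = ∫ u in a₀..b₀, φ u := by
      simp only [hg, hΦ]
      exact intervalIntegral.integral_interval_sub_left
        (hφ.intervalIntegrable _ _) (hφ.intervalIntegrable _ _)
    have hconst' : φ a₀ * (b₀ - a₀) = ∫ _u in a₀..b₀, φ a₀ := by
      rw [intervalIntegral.integral_const, smul_eq_mul, mul_comm]
    rw [hΦdiff, hconst',
      ← intervalIntegral.integral_sub (intervalIntegrable_const) (hφ.intervalIntegrable _ _)]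
    have hbound : ∀ u ∈ Set.uIoc a₀ b₀, ‖φ a₀ - φ u‖ ≤ ε₁ := by
      intro u hu
      rw [Set.uIoc_of_le hab] at hu
      have huI : u ∈ Icc (0:ℝ) L := ⟨le_trans haI.1 hu.1.le, le_trans hu.2 hbI.2⟩
      have hdau : dist a₀ u ≤ δ := by
        rw [Real.dist_eq, abs_of_nonpos (by linarith [hu.1.le])]
        have : -(a₀ - u) = u - a₀ := by ring
        rw [this]
        linarith [hu.2, hmesh i]
      have := hUCφ _ haI _ huI hdau
      rw [Real.dist_eq] at this
      exact this
    calc |∫ u in a₀..b₀, (φ a₀ - φ u)| = ‖∫ u in a₀..b₀, (φ a₀ - φ u)‖ := rfl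
      _ ≤ ε₁ * |b₀ - a₀| :=
          intervalIntegral.norm_integral_le_of_norm_le_const hbound
      _ = ε₁ * (b₀ - a₀) := by rw [abs_of_nonneg (by linarith)]
  -- telescoping identities
  have htelb : ∑ i ∈ Finset.range (n * n), (b (i + 1) - b i) = L := by
    rw [Finset.sum_range_sub, hbtop, hb0', sub_zero]
  have htelg : ∑ i ∈ Finset.range (n * n), (g (i + 1) - g i) = Φ L := by
    rw [Finset.sum_range_sub]
    have : g (n * n) = Φ L := by simp only [hg]; rw [show B (c (n*n)) = L from hbtop]
    rw [this]
    have : g 0 = 0 := by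
      simp only [hg, hc, Nat.cast_zero, zero_div, hB0, hΦ]
      exact intervalIntegral.integral_same
    rw [this, sub_zero]
  -- conclusion
  have hS : (∑ i ∈ Finset.range (n * n),
      φ (B ((i : ℝ≥0) / (n : ℝ≥0))) *
        (B (((i : ℝ≥0) + 1) / (n : ℝ≥0)) - B ((i : ℝ≥0) / (n : ℝ≥0))))
      = ∑ i ∈ Finset.range (n * n), φ (b i) * (b (i + 1) - b i) := by
    apply Finset.sum_congr rfl
    intro i _
    have h1 : c (i + 1) = ((i : ℝ≥0) + 1) / (n : ℝ≥0) := by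
      simp only [hc]; push_cast; ring
    simp only [hb, h1]
    rfl
  rw [Real.dist_eq, hS]
  have key : |∑ i ∈ Finset.range (n * n), φ (b i) * (b (i + 1) - b i) - Φ L| ≤ ε₁ * L := by
    rw [← htelg, ← Finset.sum_sub_distrib]
    calc |∑ i ∈ Finset.range (n * n),
          (φ (b i) * (b (i + 1) - b i) - (g (i + 1) - g i))|
        ≤ ∑ i ∈ Finset.range (n * n),
          |φ (b i) * (b (i + 1) - b i) - (g (i + 1) - g i)| :=
          Finset.abs_sum_le_sum_abs _ _
      _ ≤ ∑ i ∈ Finset.range (n * n), ε₁ * (b (i + 1) - b i) :=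
          Finset.sum_le_sum fun i _ => hterm i
      _ = ε₁ * L := by rw [← Finset.mul_sum, htelb]
  have hfin : ε₁ * L < ε := by
    have h1 : ε₁ * L ≤ ε₁ * (L + 1) := by nlinarith
    have h2 : ε₁ * (L + 1) = ε / 2 := by
      rw [hε₁def]; field_simp
    linarith
  exact lt_of_le_of_lt key hfin

section
open intervalIntegral
lemma cdf_ode (ν : Measure ℝ) [IsProbabilityMeasure ν] (hsupp : ν (Iio 0) = 0)
    (key : ∀ φ : ℝ → ℝ, Continuous φ → (∃ C, ∀ x, |φ x| ≤ C) →
      ∫ x, φ x ∂ν = ∫ x, (∫ u in (0:ℝ)..x, φ u) ∂ν) :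
    ∀ t : ℝ, 0 ≤ t → ν (Iic t) = ENNReal.ofReal (1 - Real.exp (-t)) := by
  have hae : ∀ᵐ x ∂ν, 0 ≤ x := by
    rw [ae_iff]
    convert hsupp using 2
    ext x; simp [not_le]
  set f : ℝ → ℝ := fun t => (ν (Iic t)).toReal with hfdef
  have hfin : ∀ t, ν (Iic t) ≠ ⊤ := fun t => measure_ne_top ν _
  have hf0 : ∀ t, 0 ≤ f t := fun t => ENNReal.toReal_nonneg
  have hf1 : ∀ t, f t ≤ 1 := by
    intro t
    rw [hfdef]
    simp only
    rw [show (1:ℝ) = (1 : ℝ≥0∞).toReal by simp]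
    exact ENNReal.toReal_mono (by simp) (prob_le_one)
  have hfmono : Monotone f := fun s t hst =>
    ENNReal.toReal_mono (hfin t) (measure_mono (Iic_subset_Iic.2 hst))
  have hfmeas : Measurable f := hfmono.measurable
  set K : ℝ → ℝ := fun t => ∫ x, min x t ∂ν with hKdef
  have hKint : ∀ t : ℝ, 0 ≤ t → Integrable (fun x => min x t) ν := by
    intro t ht
    refine ⟨((continuous_id.min continuous_const).measurable).aestronglyMeasurable, ?_⟩
    apply HasFiniteIntegral.of_bounded (C := t)
    filter_upwards [hae] with x hx
    rw [Real.norm_eq_abs, abs_of_nonneg (le_min hx ht)]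
    exact min_le_right _ _
  -- Step 1 : f = K on [0, ∞)
  have step1 : ∀ t : ℝ, 0 ≤ t → f t = K t := by
    intro t ht
    have main : ∀ ε : ℝ, 0 < ε → f t ≤ K t + ε ∧ K t ≤ f (t + ε) := by
      intro ε hε
      set φ : ℝ → ℝ := fun x => max 0 (min 1 ((t + ε - x) / ε)) with hφdef
      have hφc : Continuous φ :=
        continuous_const.max (continuous_const.min (by fun_prop))
      have hφ_nn : ∀ x, 0 ≤ φ x := fun x => le_max_left _ _
      have hφ_le1 : ∀ x, φ x ≤ 1 := fun x => max_le zero_le_one (min_le_left _ _)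
      have hφbd : ∀ x, |φ x| ≤ 1 := fun x => by
        rw [abs_of_nonneg (hφ_nn x)]; exact hφ_le1 x
      have hφ1 : ∀ x, x ≤ t → φ x = 1 := by
        intro x hx
        have : (1:ℝ) ≤ (t + ε - x) / ε := by
          rw [le_div_iff₀ hε]; linarith
        rw [hφdef]; simp only [min_eq_left this]
        exact max_eq_right zero_le_one
      have hφ0 : ∀ x, t + ε ≤ x → φ x = 0 := by
        intro x hx
        have h2 : (t + ε - x) / ε ≤ 0 := div_nonpos_of_nonpos_of_nonneg (by linarith) hε.le
        rw [hφdef]; simp only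
        rw [min_eq_right (by linarith), max_eq_left h2]
      set Φ : ℝ → ℝ := fun x => ∫ u in (0:ℝ)..x, φ u with hΦdef
      have hΦint : ∀ a b : ℝ, IntervalIntegrable φ volume a b :=
        fun a b => hφc.intervalIntegrable a b
      have hΦ_eq_1 : ∀ b, 0 ≤ b → b ≤ t → Φ b = b := by
        intro b hb hbt
        rw [hΦdef]
        simp only
        rw [integral_congr (g := fun _ => (1:ℝ)) ?_, intervalIntegral.integral_const, smul_eq_mul,
          sub_zero, mul_one]
        intro u hu
        rw [uIcc_of_le hb] at hu
        exact hφ1 u (le_trans hu.2 hbt)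
      have hΦlb : ∀ x, 0 ≤ x → min x t ≤ Φ x := by
        intro x hx
        rcases le_total x t with h | h
        · rw [min_eq_left h, hΦ_eq_1 x hx h]
        · rw [min_eq_right h]
          have hsplit : Φ x = (∫ u in (0:ℝ)..t, φ u) + ∫ u in t..x, φ u := by
            rw [hΦdef]; simp only
            rw [integral_add_adjacent_intervals (hΦint 0 t) (hΦint t x)]
          have h1 : (∫ u in (0:ℝ)..t, φ u) = t := hΦ_eq_1 t ht le_rfl
          have h2 : 0 ≤ ∫ u in t..x, φ u :=
            integral_nonneg h (fun u _ => hφ_nn u)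
          rw [hsplit, h1]; linarith
      have hΦub : ∀ x, 0 ≤ x → Φ x ≤ min x (t + ε) := by
        intro x hx
        have hle : ∀ b c : ℝ, b ≤ c → Φ c ≤ Φ b + (c - b) := by
          intro b c hbc
          have hsplit : Φ c = Φ b + ∫ u in b..c, φ u := by
            rw [hΦdef]; simp only
            rw [integral_add_adjacent_intervals (hΦint 0 b) (hΦint b c)]
          have h2 : (∫ u in b..c, φ u) ≤ ∫ u in b..c, (1:ℝ) :=
            integral_mono_on hbc (hΦint b c) intervalIntegrable_const
              (fun u _ => hφ_le1 u)
          rw [intervalIntegral.integral_const, smul_eq_mul, mul_one] at h2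
          linarith [hsplit, h2]
        rcases le_total x (t + ε) with h | h
        · rw [min_eq_left h]
          have := hle 0 x hx
          have hΦ0 : Φ 0 = 0 := integral_same
          linarith
        · rw [min_eq_right h]
          have h1 : Φ x = Φ (t + ε) + ∫ u in (t+ε)..x, φ u := by
            rw [hΦdef]; simp only
            rw [integral_add_adjacent_intervals (hΦint 0 (t+ε)) (hΦint (t+ε) x)]
          have h2 : (∫ u in (t+ε)..x, φ u) = 0 := by
            rw [integral_congr (g := fun _ => (0:ℝ)) ?_, intervalIntegral.integral_zero]
            intro u hu
            rw [uIcc_of_le h] at hu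
            exact hφ0 u hu.1
          have h3 := hle 0 (t + ε) (by linarith)
          have hΦ0 : Φ 0 = 0 := integral_same
          linarith
      have hΦnn : ∀ x, 0 ≤ x → 0 ≤ Φ x := by
        intro x hx
        have := hΦlb x hx
        have : 0 ≤ min x t := le_min hx ht
        nlinarith [hΦlb x hx, le_min hx ht]
      -- integrability under ν
      have hφint : Integrable φ ν :=
        ⟨hφc.measurable.aestronglyMeasurable,
          HasFiniteIntegral.of_bounded (ae_of_all _ fun x => by
            rw [Real.norm_eq_abs]; exact hφbd x)⟩
      have hΦcont : Continuous Φ := continuous_primitive hΦint 0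
      have hΦνint : Integrable (fun x => Φ x) ν := by
        refine ⟨hΦcont.measurable.aestronglyMeasurable, ?_⟩
        apply HasFiniteIntegral.of_bounded (C := t + ε)
        filter_upwards [hae] with x hx
        rw [Real.norm_eq_abs, abs_of_nonneg (hΦnn x hx)]
        exact le_trans (hΦub x hx) (min_le_right _ _)
      have hkey := key φ hφc ⟨1, hφbd⟩
      -- indicator comparisons
      have hind : ∀ s : ℝ, (∫ x, (Iic s).indicator (fun _ => (1:ℝ)) x ∂ν) = f s := by
        intro s
        rw [integral_indicator_const (1:ℝ) measurableSet_Iic]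
        simp [hfdef, Measure.real]
      have hind_int : ∀ s : ℝ, Integrable ((Iic s).indicator (fun _ => (1:ℝ))) ν := by
        intro s
        refine ⟨((measurable_const).indicator measurableSet_Iic).aestronglyMeasurable, ?_⟩
        apply HasFiniteIntegral.of_bounded (C := 1)
        refine ae_of_all _ fun x => ?_
        rw [Real.norm_eq_abs]
        rcases le_or_gt x s with h | h
        · rw [Set.indicator_of_mem (mem_Iic.2 h)]; simp
        · rw [Set.indicator_of_notMem (by simp [h.not_ge])]; simp
      have hlow : f t ≤ ∫ x, φ x ∂ν := by
        rw [← hind t]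
        apply integral_mono (hind_int t) hφint
        intro x
        rcases le_or_gt x t with h | h
        · rw [Set.indicator_of_mem (mem_Iic.2 h), hφ1 x h]
        · rw [Set.indicator_of_notMem (by simp [h.not_ge])]; exact hφ_nn x
      have hhigh : (∫ x, φ x ∂ν) ≤ f (t + ε) := by
        rw [← hind (t + ε)]
        apply integral_mono hφint (hind_int (t + ε))
        intro x
        rcases le_or_gt x (t + ε) with h | h
        · rw [Set.indicator_of_mem (mem_Iic.2 h)]; exact hφ_le1 x
        · rw [Set.indicator_of_notMem (by simp [h.not_ge]), hφ0 x h.le]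
      have hK1 : K t ≤ ∫ x, Φ x ∂ν := by
        apply integral_mono_ae (hKint t ht) hΦνint
        filter_upwards [hae] with x hx
        exact hΦlb x hx
      have hK2 : (∫ x, Φ x ∂ν) ≤ K (t + ε) := by
        apply integral_mono_ae hΦνint (hKint (t + ε) (by linarith))
        filter_upwards [hae] with x hx
        exact hΦub x hx
      have hptw : ∀ x : ℝ, min x (t + ε) ≤ min x t + ε := by
        intro x
        rcases le_total x t with h | h
        · have h1 : min x t = x := min_eq_left h
          have := min_le_left x (t + ε)
          linarith
        · have h1 : min x t = t := min_eq_right h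
          have := min_le_right x (t + ε)
          linarith
      have hKKe : K (t + ε) ≤ K t + ε := by
        have heq : (∫ x, (min x t + ε) ∂ν) = K t + ε := by
          rw [integral_add (hKint t ht) (integrable_const ε), MeasureTheory.integral_const]
          simp [hKdef]
        rw [← heq]
        exact integral_mono (hKint (t+ε) (by linarith))
          ((hKint t ht).add (integrable_const ε)) hptw
      constructor
      · calc f t ≤ ∫ x, φ x ∂ν := hlow
          _ = ∫ x, Φ x ∂ν := hkey
          _ ≤ K (t + ε) := hK2
          _ ≤ K t + ε := hKKe
      · calc K t ≤ ∫ x, Φ x ∂ν := hK1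
          _ = ∫ x, φ x ∂ν := hkey.symm
          _ ≤ f (t + ε) := hhigh
    have h1 : f t ≤ K t := by
      by_contra hcon
      push_neg at hcon
      have := (main ((f t - K t) / 2) (by linarith)).1
      linarith
    have h2 : K t ≤ f t := by
      have hrc : ContinuousWithinAt f (Ici t) t := by
        have := (cdf ν).right_continuous t
        have heq : (cdf ν : ℝ → ℝ) = f := by
          ext s; rw [cdf_eq_real]; rfl
        rwa [heq] at this
      have htend : Tendsto f (𝓝[>] t) (𝓝 (f t)) :=
        hrc.tendsto.mono_left (nhdsWithin_mono t Ioi_subset_Ici_self)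
      refine ge_of_tendsto htend ?_
      filter_upwards [self_mem_nhdsWithin] with s hs
      have := (main (s - t) (by simpa using hs)).2
      simpa using this
    linarith
  
  -- Step 2 : K t = ∫ s in 0..t, (1 - f s)
  have hIooFin : ∀ t : ℝ, IsFiniteMeasure (volume.restrict (Ioo (0:ℝ) t)) := by
    intro t
    constructor
    rw [Measure.restrict_apply_univ]
    exact measure_Ioo_lt_top
  have step2 : ∀ t : ℝ, 0 ≤ t → K t = ∫ s in Ioo (0:ℝ) t, (1 - f s) := by
    intro t ht
    have hKnn : 0 ≤ K t := by
      apply MeasureTheory.integral_nonneg_of_ae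
      filter_upwards [hae] with x hx
      exact le_min hx ht
    have hJnn : 0 ≤ ∫ s in Ioo (0:ℝ) t, (1 - f s) := by
      apply setIntegral_nonneg measurableSet_Ioo
      intro s _; linarith [hf1 s]
    have hlhs : ENNReal.ofReal (K t) = ∫⁻ x, ENNReal.ofReal (min x t) ∂ν :=
      ofReal_integral_eq_lintegral_ofReal (hKint t ht)
        (by filter_upwards [hae] with x hx; exact le_min hx ht)
    have hlayer : (∫⁻ x, ENNReal.ofReal (min x t) ∂ν)
        = ∫⁻ s in Ioi (0:ℝ), ν {x | s < min x t} :=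
      lintegral_eq_lintegral_meas_lt ν
        (by filter_upwards [hae] with x hx; exact le_min hx ht)
        ((continuous_id.min continuous_const).measurable.aemeasurable)
    have hsetcongr : (∫⁻ s in Ioi (0:ℝ), ν {x | s < min x t})
        = ∫⁻ s in Ioi (0:ℝ), (Iio t).indicator (fun s => ν (Ioi s)) s := by
      apply lintegral_congr
      intro s
      rcases lt_or_ge s t with h | h
      · rw [Set.indicator_of_mem (mem_Iio.2 h)]
        congr 1
        ext x; simp [lt_min_iff, h]
      · rw [Set.indicator_of_notMem (by simp [h.not_gt])]
        have hemp : {x : ℝ | s < min x t} = ∅ := by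
          rw [Set.eq_empty_iff_forall_notMem]
          intro x
          simp only [mem_setOf_eq, lt_min_iff, not_and]
          intro _
          exact h.not_gt
        rw [hemp, measure_empty]
    have hindic : (∫⁻ s in Ioi (0:ℝ), (Iio t).indicator (fun s => ν (Ioi s)) s)
        = ∫⁻ s in Ioo (0:ℝ) t, ν (Ioi s) := by
      rw [lintegral_indicator measurableSet_Iio,
        Measure.restrict_restrict measurableSet_Iio]
      rw [Set.inter_comm, Set.Ioi_inter_Iio]
    have hν_Ioi : ∀ s : ℝ, ν (Ioi s) = ENNReal.ofReal (1 - f s) := by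
      intro s
      have h1 : ν (Ioi s) = 1 - ν (Iic s) := by
        rw [← Set.compl_Iic, measure_compl measurableSet_Iic (hfin s)]
        simp [measure_univ]
      rw [h1, ENNReal.ofReal_sub _ (hf0 s), ENNReal.ofReal_one,
        ENNReal.ofReal_toReal (hfin s)]
    have hins : (∫⁻ s in Ioo (0:ℝ) t, ν (Ioi s))
        = ∫⁻ s in Ioo (0:ℝ) t, ENNReal.ofReal (1 - f s) :=
      lintegral_congr fun s => hν_Ioi s
    haveI := hIooFin t
    have hint1f : Integrable (fun s => 1 - f s) (volume.restrict (Ioo (0:ℝ) t)) := by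
      refine ⟨(measurable_const.sub hfmeas).aestronglyMeasurable, ?_⟩
      apply HasFiniteIntegral.of_bounded (C := 1)
      apply ae_of_all
      intro s
      rw [Real.norm_eq_abs, abs_of_nonneg (by linarith [hf1 s])]
      linarith [hf0 s]
    have hrhs : (∫⁻ s in Ioo (0:ℝ) t, ENNReal.ofReal (1 - f s))
        = ENNReal.ofReal (∫ s in Ioo (0:ℝ) t, (1 - f s)) :=
      (ofReal_integral_eq_lintegral_ofReal hint1f
        (ae_of_all _ fun s => by simp only [Pi.zero_apply]; linarith [hf1 s])).symm
    have hchain : ENNReal.ofReal (K t)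
        = ENNReal.ofReal (∫ s in Ioo (0:ℝ) t, (1 - f s)) := by
      rw [hlhs, hlayer, hsetcongr, hindic, hins, hrhs]
    exact (ENNReal.ofReal_eq_ofReal_iff hKnn hJnn).1 hchain
  have step2' : ∀ t : ℝ, 0 ≤ t → K t = ∫ s in (0:ℝ)..t, (1 - f s) := by
    intro t ht
    rw [step2 t ht, ← MeasureTheory.integral_Ioc_eq_integral_Ioo,
      ← intervalIntegral.integral_of_le ht]
  -- Step 3 : the ODE
  set g : ℝ → ℝ := fun s => 1 - f s with hgdef
  have hg_int : ∀ a b : ℝ, IntervalIntegrable g volume a b := by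
    intro a b
    rw [intervalIntegrable_iff]
    haveI : IsFiniteMeasure (volume.restrict (Set.uIoc a b)) := by
      constructor
      rw [Measure.restrict_apply_univ, Set.uIoc]
      exact measure_Ioc_lt_top
    refine ⟨(measurable_const.sub hfmeas).aestronglyMeasurable.restrict, ?_⟩
    apply HasFiniteIntegral.of_bounded (C := 1)
    apply ae_of_all
    intro s
    rw [Real.norm_eq_abs, hgdef]
    simp only
    rw [abs_of_nonneg (by linarith [hf1 s])]
    linarith [hf0 s]
  set hprim : ℝ → ℝ := fun t => ∫ s in (0:ℝ)..t, g s with hhdef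
  have hhc : Continuous hprim := intervalIntegral.continuous_primitive hg_int 0
  have hfh : ∀ t : ℝ, 0 ≤ t → f t = hprim t := by
    intro t ht
    rw [step1 t ht, step2' t ht]
  have hfcont : ContinuousOn f (Ici (0:ℝ)) := by
    apply (hhc.continuousOn).congr
    intro x hx
    exact hfh x hx
  have hder : ∀ x : ℝ, 0 ≤ x → HasDerivWithinAt f (g x) (Ici x) x := by
    intro x hx
    have hIci : Ici x ⊆ Ici (0:ℝ) := fun y hy => le_trans hx hy
    have hgc : ContinuousWithinAt g (Ioi x) x := by
      have h1 : ContinuousWithinAt f (Ici 0) x := hfcont x hx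
      have h2 : ContinuousWithinAt f (Ioi x) x :=
        h1.mono (fun y hy => le_trans hx (le_of_lt hy))
      exact continuousWithinAt_const.sub h2
    have hmeasAt : StronglyMeasurableAtFilter g (𝓝[>] x) volume :=
      ⟨Set.univ, univ_mem, (measurable_const.sub hfmeas).aestronglyMeasurable.restrict⟩
    have hd : HasDerivWithinAt hprim (g x) (Ici x) x :=
      intervalIntegral.integral_hasDerivWithinAt_right (hg_int 0 x) hmeasAt hgc
    exact hd.congr (fun y hy => hfh y (hIci hy)) (hfh x hx)
  intro t ht
  set w : ℝ → ℝ := fun s => Real.exp s * (1 - f s) with hwdef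
  have hwcont : ContinuousOn w (Icc (0:ℝ) t) := by
    apply ContinuousOn.mul Real.continuous_exp.continuousOn
    exact continuousOn_const.sub (hfcont.mono (fun y hy => hy.1))
  have hwder : ∀ x ∈ Ico (0:ℝ) t, HasDerivWithinAt w 0 (Ici x) x := by
    intro x hx
    have h1 : HasDerivWithinAt Real.exp (Real.exp x) (Ici x) x :=
      (Real.hasDerivAt_exp x).hasDerivWithinAt
    have h2 : HasDerivWithinAt (fun s => 1 - f s) (-(g x)) (Ici x) x := by
      have h3 := (hasDerivWithinAt_const x (Ici x) (1:ℝ)).sub (hder x hx.1)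
      exact h3.congr_deriv (zero_sub _)
    have h4 := h1.mul h2
    have h5 : Real.exp x * -g x + Real.exp x * (1 - f x) = 0 := by
      rw [hgdef]; ring
    exact h4.congr_deriv (by rw [hgdef]; ring)
  have hconst := constant_of_has_deriv_right_zero hwcont hwder
  have hwt := hconst t ⟨ht, le_rfl⟩
  have hf00 : f 0 = 0 := by
    rw [hfh 0 le_rfl, hhdef]
    simp only
    exact intervalIntegral.integral_same
  have hw0 : w 0 = 1 := by
    rw [hwdef]; simp [hf00]
  rw [hw0] at hwt
  have hft : f t = 1 - Real.exp (-t) := by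
    have hexp : (0:ℝ) < Real.exp t := Real.exp_pos t
    have h1 : Real.exp t * (1 - f t) = 1 := hwt
    have h2 : 1 - f t = Real.exp (-t) := by
      rw [Real.exp_neg]
      field_simp
      linarith [h1]
    linarith [h2]
  rw [← ENNReal.ofReal_toReal (hfin t)]
  rw [show (ν (Iic t)).toReal = f t from rfl, hft]

end

/-- Let `τ` be an (a.s. finite, here `ℝ≥0`-valued) stopping time with
`P(τ > 0) = 1`, whose compensator `A` has continuous nondecreasing paths with `A 0 = 0`,
i.e. `t ↦ 1_{t ≥ τ} - A_{t ∧ τ}` is a martingale.  Then `A_τ` is exponentially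
distributed with parameter `1`: for every `t ≥ 0`, `P(A_τ ≤ t) = 1 - exp (-t)`. -/
theorem compensator_at_totally_inaccessible_time_is_exponential
    {Ω : Type*} {m0 : MeasurableSpace Ω} {P : Measure Ω} [IsProbabilityMeasure P]
    (F : Filtration ℝ≥0 m0) (τ : Ω → ℝ≥0) (A : ℝ≥0 → Ω → ℝ)
    (hτ : IsStoppingTime F (fun ω => (τ ω : WithTop ℝ≥0)))
    (hτ_pos : P {ω | 0 < τ ω} = 1)
    (hA_adapted : Adapted F A)
    (hA_cont : ∀ ω, Continuous fun t => A t ω)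
    (hA_mono : ∀ ω, Monotone fun t => A t ω)
    (hA_zero : ∀ ω, A 0 ω = 0)
    (hM : Martingale (fun t ω => (if τ ω ≤ t then (1 : ℝ) else 0) - A (min t (τ ω)) ω) F P) :
    ∀ t : ℝ≥0, P {ω | A (τ ω) ω ≤ (t : ℝ)} = ENNReal.ofReal (1 - Real.exp (-(t : ℝ))) := by
  classical
  -- basic notation
  set M : ℝ≥0 → Ω → ℝ :=
    fun t ω => (if τ ω ≤ t then (1 : ℝ) else 0) - A (min t (τ ω)) ω with hMdef
  set B : ℝ≥0 → Ω → ℝ := fun t ω => A (min t (τ ω)) ω with hBdef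
  set X : Ω → ℝ := fun ω => A (τ ω) ω with hXdef
  have hAnn : ∀ t ω, 0 ≤ A t ω := fun t ω => by
    rw [← hA_zero ω]; exact hA_mono ω (zero_le (a := t))
  have hprog : IsStronglyProgressive F A :=
    hA_adapted.stronglyAdapted.isStronglyProgressive_of_continuous hA_cont
  have hτ' : ∀ t : ℝ≥0, MeasurableSet[F t] {ω | τ ω ≤ t} := fun t => by simpa only [WithTop.coe_le_coe] using hτ t
  have hXmeas : Measurable X := by
    have h1 := measurable_stoppedValue (β := ℝ) hprog hτ
    exact (h1.mono hτ.measurableSpace_le le_rfl)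
  have hBsm : ∀ t : ℝ≥0, StronglyMeasurable[F t] (B t) := by
    intro t
    have h1 := stronglyMeasurable_stoppedValue_of_le (β := ℝ) hprog (hτ.min_const t)
      (fun ω => min_le_right _ _)
    have : B t = stoppedValue A fun ω => min ((τ ω : WithTop ℝ≥0)) (t : WithTop ℝ≥0) := by
      funext ω; simp only [hBdef, stoppedValue, ← WithTop.coe_min, WithTop.untopD_coe, min_comm]
    rwa [this]
  have hBmeas : ∀ t : ℝ≥0, Measurable (B t) := fun t =>
    ((hBsm t).mono (F.le t)).measurable
  have hτmeas : Measurable τ := hτ.measurable'.untopA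
  have hBnn : ∀ t ω, 0 ≤ B t ω := fun t ω => hAnn _ ω
  have hBleX : ∀ t ω, B t ω ≤ X ω := fun t ω => hA_mono ω (min_le_right _ _)
  have hBmono : ∀ ω, Monotone fun t => B t ω := fun ω s t hst =>
    hA_mono ω (min_le_min hst le_rfl)
  -- indicator integrability
  have hind_int : ∀ t : ℝ≥0,
      Integrable (fun ω => if τ ω ≤ t then (1:ℝ) else 0) P := by
    intro t
    refine ⟨?_, ?_⟩
    · refine (Measurable.ite ?_ measurable_const measurable_const).aestronglyMeasurable
      exact (F.le t) _ (hτ' t)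
    · apply HasFiniteIntegral.of_bounded (C := 1)
      refine ae_of_all _ fun ω => ?_
      rw [Real.norm_eq_abs]
      split_ifs <;> simp
  have hBint : ∀ t : ℝ≥0, Integrable (B t) P := by
    intro t
    have h1 : B t = fun ω => (if τ ω ≤ t then (1:ℝ) else 0) - M t ω := by
      funext ω; simp [hMdef, hBdef]
    rw [h1]
    exact (hind_int t).sub (hM.integrable t)
  -- expectations of M vanish
  have hP0 : P {ω | τ ω ≤ 0} = 0 := by
    have hcompl : {ω | 0 < τ ω}ᶜ = {ω | τ ω ≤ 0} := by
      ext ω; simp [not_lt]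
    have hmeas0 : MeasurableSet {ω | 0 < τ ω} := by
      rw [show {ω | 0 < τ ω} = {ω | τ ω ≤ 0}ᶜ by ext ω; simp [not_le, pos_iff_ne_zero]]
      exact ((F.le 0) _ (hτ' 0)).compl
    have := measure_compl hmeas0 (measure_ne_top P _)
    rw [hτ_pos, measure_univ] at this
    rw [← hcompl, this, tsub_self]
  have hmin0 : ∀ ω, min 0 (τ ω) = 0 := fun ω => min_eq_left zero_le
  have hEM : ∀ t : ℝ≥0, ∫ ω, M t ω ∂P = 0 := by
    intro t
    have h1 : ∫ ω, M t ω ∂P = ∫ ω, M 0 ω ∂P := by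
      calc ∫ ω, M t ω ∂P = ∫ ω, (P[M t | F 0]) ω ∂P := (integral_condExp (F.le 0)).symm
        _ = ∫ ω, M 0 ω ∂P := integral_congr_ae (hM.condExp_ae_eq (zero_le (a := t)))
    have h2 : M 0 = Set.indicator {ω | τ ω ≤ 0} (fun _ => (1:ℝ)) := by
      funext ω
      rw [Set.indicator_apply]
      simp only [hMdef, hmin0 ω, hA_zero ω, Set.mem_setOf_eq, sub_zero]
    have h3 : ∫ ω, M 0 ω ∂P = (P {ω | τ ω ≤ 0}).toReal := by
      rw [h2]
      exact integral_indicator_one ((F.le 0) _ (hτ' 0))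
    rw [h1, h3, hP0]
    simp
  have hEB : ∀ t : ℝ≥0, ∫ ω, B t ω ∂P ≤ 1 := by
    intro t
    have h1 : ∫ ω, B t ω ∂P
        = (∫ ω, (if τ ω ≤ t then (1:ℝ) else 0) ∂P) - ∫ ω, M t ω ∂P := by
      rw [← integral_sub (hind_int t) (hM.integrable t)]
      apply integral_congr_ae
      apply ae_of_all
      intro ω
      simp [hMdef, hBdef]
    rw [h1, hEM t, sub_zero]
    calc (∫ ω, (if τ ω ≤ t then (1:ℝ) else 0) ∂P) ≤ ∫ _ω, (1:ℝ) ∂P := by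
          apply integral_mono (hind_int t) (integrable_const 1)
          intro ω; dsimp only; split_ifs <;> norm_num
      _ = 1 := by simp
  -- integrability of X
  have hXint : Integrable X P := by
    refine ⟨hXmeas.aestronglyMeasurable, ?_⟩
    rw [hasFiniteIntegral_iff_ofReal (ae_of_all _ fun ω => hAnn _ ω)]
    have hsup : ∀ ω, (⨆ n : ℕ, ENNReal.ofReal (B (n : ℝ≥0) ω)) = ENNReal.ofReal (X ω) := by
      intro ω
      apply le_antisymm
      · exact iSup_le fun n => ENNReal.ofReal_le_ofReal (hBleX _ ω)
      · have hble : τ ω ≤ ((⌈τ ω⌉₊ : ℕ) : ℝ≥0) := Nat.le_ceil _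
        have hBeq : B ((⌈τ ω⌉₊ : ℕ) : ℝ≥0) ω = X ω := by
          simp only [hBdef, hXdef, min_eq_right hble]
        refine le_trans (le_of_eq ?_) (le_iSup _ (⌈τ ω⌉₊ : ℕ))
        rw [hBeq]
    have hmono : Monotone fun n : ℕ => fun ω => ENNReal.ofReal (B (n : ℝ≥0) ω) := by
      intro m n hmn
      intro ω
      exact ENNReal.ofReal_le_ofReal (hBmono ω (by exact_mod_cast hmn))
    have hlin : ∫⁻ ω, ENNReal.ofReal (X ω) ∂P
        = ⨆ n : ℕ, ∫⁻ ω, ENNReal.ofReal (B (n : ℝ≥0) ω) ∂P := by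
      rw [← lintegral_iSup (fun n => (hBmeas _).ennreal_ofReal) hmono]
      exact lintegral_congr fun ω => (hsup ω).symm
    have hband : ∀ n : ℕ, (∫⁻ ω, ENNReal.ofReal (B (n : ℝ≥0) ω) ∂P) ≤ 1 := by
      intro n
      rw [← ofReal_integral_eq_lintegral_ofReal (hBint _) (ae_of_all _ fun ω => hBnn _ ω)]
      calc ENNReal.ofReal (∫ ω, B (n:ℝ≥0) ω ∂P) ≤ ENNReal.ofReal 1 :=
            ENNReal.ofReal_le_ofReal (hEB _)
        _ = 1 := ENNReal.ofReal_one
    rw [hlin]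
    exact lt_of_le_of_lt (iSup_le hband) ENNReal.one_lt_top
  -- the key identity
  have hkey : ∀ φ : ℝ → ℝ, Continuous φ → (∃ C, ∀ x, |φ x| ≤ C) →
      ∫ ω, φ (X ω) ∂P = ∫ ω, (∫ u in (0:ℝ)..(X ω), φ u) ∂P := by
    intro φ hφ hbd
    obtain ⟨C₀, hC₀⟩ := hbd
    have hC0nn : 0 ≤ C₀ := le_trans (abs_nonneg _) (hC₀ 0)
    have hAmeas : ∀ s : ℝ≥0, Measurable (A s) :=
      fun s => (hA_adapted s).mono (F.le s) le_rfl
    have hsetIoc : ∀ s t : ℝ≥0, MeasurableSet {ω | s < τ ω ∧ τ ω ≤ t} :=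
      fun s t => hτmeas measurableSet_Ioc
    have hint1 : ∀ s t : ℝ≥0, Integrable
        (fun ω => φ (A s ω) * (if s < τ ω ∧ τ ω ≤ t then (1:ℝ) else 0)) P := by
      intro s t
      refine ⟨((hφ.measurable.comp (hAmeas s)).mul
        (Measurable.ite (hsetIoc s t) measurable_const measurable_const)).aestronglyMeasurable, ?_⟩
      apply HasFiniteIntegral.of_bounded (C := C₀)
      refine ae_of_all _ fun ω => ?_
      rw [Real.norm_eq_abs, abs_mul]
      calc |φ (A s ω)| * |if s < τ ω ∧ τ ω ≤ t then (1:ℝ) else 0| ≤ C₀ * 1 := by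
            apply mul_le_mul (hC₀ _) ?_ (abs_nonneg _) hC0nn
            split_ifs <;> norm_num
        _ = C₀ := mul_one _
    have hint2 : ∀ s t : ℝ≥0, Integrable
        (fun ω => φ (B s ω) * (B t ω - B s ω)) P := by
      intro s t
      have h1 : Integrable (fun ω => B t ω - B s ω) P := (hBint t).sub (hBint s)
      exact h1.bdd_mul (hφ.measurable.comp (hBmeas s)).aestronglyMeasurable
        (ae_of_all _ fun ω => by rw [Real.norm_eq_abs]; exact hC₀ _)
    -- the basic one-step identity
    have hIst : ∀ s t : ℝ≥0, s ≤ t →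
        ∫ ω, φ (A s ω) * (if s < τ ω ∧ τ ω ≤ t then (1:ℝ) else 0) ∂P
          = ∫ ω, φ (B s ω) * (B t ω - B s ω) ∂P := by
      intro s t hst
      set Y : Ω → ℝ := fun ω => φ (A s ω) * (if s < τ ω then (1:ℝ) else 0) with hYdef
      have hYsm : StronglyMeasurable[F s] Y := by
        apply StronglyMeasurable.mul
        · exact hφ.comp_stronglyMeasurable (hA_adapted s).stronglyMeasurable
        · have hms : MeasurableSet[F s] {ω | s < τ ω} := by
            have h1 : {ω | s < τ ω} = {ω | τ ω ≤ s}ᶜ := by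
              ext ω; simp [not_le]
            rw [h1]
            exact (hτ' s).compl
          have h2 : (fun ω => if s < τ ω then (1:ℝ) else 0)
              = Set.indicator {ω | s < τ ω} (fun _ => (1:ℝ)) := by
            funext ω; rw [Set.indicator_apply]; rfl
          rw [h2]
          exact stronglyMeasurable_const.indicator hms
      have hYbd : ∀ ω, ‖Y ω‖ ≤ C₀ := by
        intro ω
        rw [Real.norm_eq_abs, hYdef]
        simp only
        rw [abs_mul]
        calc |φ (A s ω)| * |if s < τ ω then (1:ℝ) else 0| ≤ C₀ * 1 := by
              apply mul_le_mul (hC₀ _) ?_ (abs_nonneg _) hC0nn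
              split_ifs <;> norm_num
          _ = C₀ := mul_one _
      have h0 := mart_incr_orth hM hst hYsm hYbd
      have hpt : ∀ ω, Y ω * (M t ω - M s ω)
          = φ (A s ω) * (if s < τ ω ∧ τ ω ≤ t then (1:ℝ) else 0)
            - φ (B s ω) * (B t ω - B s ω) := by
        intro ω
        rcases le_or_gt (τ ω) s with h | h
        · have h1 : ¬ s < τ ω := not_lt.2 h
          have hts : min t (τ ω) = τ ω := min_eq_right (le_trans h hst)
          have hss : min s (τ ω) = τ ω := min_eq_right h
          simp only [hYdef, hMdef, hBdef, h1, if_false, mul_zero, zero_mul, hts, hss,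
            sub_self, false_and, and_false]
          try ring_nf
          try simp [h1]
        · have h2 : ¬ τ ω ≤ s := not_le.2 h
          have hss : min s (τ ω) = s := min_eq_left h.le
          simp only [hYdef, hMdef, hBdef, if_pos h, h2, if_false, hss, mul_one]
          by_cases h3 : τ ω ≤ t
          · have hts : min t (τ ω) = τ ω := min_eq_right h3
            simp only [h3, if_true, hts, h, and_true, true_and]
            ring
          · have hts : min t (τ ω) = t := min_eq_left (le_of_not_ge h3)
            simp only [h3, if_false, hts, and_false]
            ring
      rw [integral_congr_ae (ae_of_all _ hpt), integral_sub (hint1 s t) (hint2 s t)] at h0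
      linarith
    set Φ : ℝ → ℝ := fun x => ∫ u in (0:ℝ)..x, φ u with hΦdef
    set Ln : ℕ → Ω → ℝ := fun n ω => ∑ i ∈ Finset.range (n*n),
      φ (A ((i:ℝ≥0)/(n:ℝ≥0)) ω) *
        (if (i:ℝ≥0)/(n:ℝ≥0) < τ ω ∧ τ ω ≤ ((i:ℝ≥0)+1)/(n:ℝ≥0) then (1:ℝ) else 0) with hLdef
    set Rn : ℕ → Ω → ℝ := fun n ω => ∑ i ∈ Finset.range (n*n),
      φ (B ((i:ℝ≥0)/(n:ℝ≥0)) ω) *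
        (B (((i:ℝ≥0)+1)/(n:ℝ≥0)) ω - B ((i:ℝ≥0)/(n:ℝ≥0)) ω) with hRdef
    have hdivle : ∀ i n : ℕ, ((i:ℝ≥0)/(n:ℝ≥0)) ≤ ((i:ℝ≥0)+1)/(n:ℝ≥0) := by
      intro i n
      gcongr
      exact le_self_add
    have hIeq : ∀ n : ℕ, ∫ ω, Ln n ω ∂P = ∫ ω, Rn n ω ∂P := by
      intro n
      rw [hLdef, hRdef]
      simp only
      rw [integral_finset_sum _ (fun i _ => hint1 _ _),
        integral_finset_sum _ (fun i _ => hint2 _ _)]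
      exact Finset.sum_congr rfl fun i _ => hIst _ _ (hdivle i n)
    have hLmeas : ∀ n, AEStronglyMeasurable (Ln n) P := by
      intro n
      apply Measurable.aestronglyMeasurable
      apply Finset.measurable_sum
      intro i _
      exact (hφ.measurable.comp (hAmeas _)).mul
        (Measurable.ite (hsetIoc _ _) measurable_const measurable_const)
    have hRmeas : ∀ n, AEStronglyMeasurable (Rn n) P := by
      intro n
      apply Measurable.aestronglyMeasurable
      apply Finset.measurable_sum
      intro i _
      exact (hφ.measurable.comp (hBmeas _)).mul ((hBmeas _).sub (hBmeas _))
    have hLbd : ∀ (n : ℕ) ω, ‖Ln n ω‖ ≤ C₀ := by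
      intro n ω
      rw [Real.norm_eq_abs]
      by_cases hex : ∃ i₀, i₀ ∈ Finset.range (n*n) ∧
          ((i₀:ℝ≥0)/(n:ℝ≥0) < τ ω ∧ τ ω ≤ ((i₀:ℝ≥0)+1)/(n:ℝ≥0))
      · obtain ⟨i₀, hi₀mem, hi₀⟩ := hex
        have hnpos : (0:ℝ≥0) < (n:ℝ≥0) := by
          have h1 := Finset.mem_range.1 hi₀mem
          have h2 : 0 < n := by
            rcases Nat.eq_zero_or_pos n with h | h
            · subst h; simp at h1
            · exact h
          exact_mod_cast h2
        have hzero : ∀ j ∈ Finset.range (n*n), j ≠ i₀ →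
            φ (A ((j:ℝ≥0)/(n:ℝ≥0)) ω) *
              (if (j:ℝ≥0)/(n:ℝ≥0) < τ ω ∧ τ ω ≤ ((j:ℝ≥0)+1)/(n:ℝ≥0) then (1:ℝ) else 0)
              = 0 := by
          intro j _ hne
          rw [if_neg, mul_zero]
          rintro ⟨hj1, hj2⟩
          rcases lt_or_gt_of_ne hne with hlt | hgt
          · have hcast : ((j:ℝ≥0)+1) ≤ (i₀:ℝ≥0) := by
              have : (j + 1 : ℕ) ≤ i₀ := hlt
              exact_mod_cast this
            have hstep : ((j:ℝ≥0)+1)/(n:ℝ≥0) ≤ (i₀:ℝ≥0)/(n:ℝ≥0) :=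
              (div_le_div_iff_of_pos_right hnpos).2 hcast
            exact absurd (lt_of_le_of_lt (le_trans hj2 hstep) hi₀.1) (lt_irrefl _)
          · have hcast : ((i₀:ℝ≥0)+1) ≤ (j:ℝ≥0) := by
              have : (i₀ + 1 : ℕ) ≤ j := hgt
              exact_mod_cast this
            have hstep : ((i₀:ℝ≥0)+1)/(n:ℝ≥0) ≤ (j:ℝ≥0)/(n:ℝ≥0) :=
              (div_le_div_iff_of_pos_right hnpos).2 hcast
            exact absurd (lt_of_le_of_lt (le_trans hi₀.2 hstep) hj1) (lt_irrefl _)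
        rw [hLdef]
        simp only
        rw [Finset.sum_eq_single_of_mem i₀ hi₀mem hzero, if_pos hi₀, mul_one]
        exact hC₀ _
      · push_neg at hex
        rw [hLdef]
        simp only
        rw [Finset.sum_eq_zero]
        · simpa using hC0nn
        · intro j hj
          have hneg : ¬((j:ℝ≥0)/(n:ℝ≥0) < τ ω ∧ τ ω ≤ ((j:ℝ≥0)+1)/(n:ℝ≥0)) := by
            rintro ⟨h1, h2⟩
            exact absurd h2 (not_le.2 (hex j hj h1))
          rw [if_neg hneg, mul_zero]
    have hRbd : ∀ (n : ℕ) ω, ‖Rn n ω‖ ≤ C₀ * X ω := by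
      intro n ω
      have htel : ∑ i ∈ Finset.range (n*n),
          (B (((i:ℝ≥0)+1)/(n:ℝ≥0)) ω - B ((i:ℝ≥0)/(n:ℝ≥0)) ω)
          = B (((n*n : ℕ):ℝ≥0)/(n:ℝ≥0)) ω - B (((0:ℕ):ℝ≥0)/(n:ℝ≥0)) ω := by
        rw [← Finset.sum_range_sub (fun i => B ((i:ℝ≥0)/(n:ℝ≥0)) ω)]
        apply Finset.sum_congr rfl
        intro i _
        have : (((i+1:ℕ)):ℝ≥0) = (i:ℝ≥0)+1 := by push_cast; ring
        rw [this]
      have hB00 : B (((0:ℕ):ℝ≥0)/(n:ℝ≥0)) ω = 0 := by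
        have h1 : (((0:ℕ):ℝ≥0)/(n:ℝ≥0)) = 0 := by simp
        rw [h1]
        simp [hBdef, hmin0 ω, hA_zero ω]
      calc ‖Rn n ω‖ ≤ ∑ i ∈ Finset.range (n*n),
            ‖φ (B ((i:ℝ≥0)/(n:ℝ≥0)) ω) *
              (B (((i:ℝ≥0)+1)/(n:ℝ≥0)) ω - B ((i:ℝ≥0)/(n:ℝ≥0)) ω)‖ :=
            norm_sum_le _ _
        _ ≤ ∑ i ∈ Finset.range (n*n),
            C₀ * (B (((i:ℝ≥0)+1)/(n:ℝ≥0)) ω - B ((i:ℝ≥0)/(n:ℝ≥0)) ω) := by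
            apply Finset.sum_le_sum
            intro i _
            rw [Real.norm_eq_abs, abs_mul]
            have hΔ : 0 ≤ B (((i:ℝ≥0)+1)/(n:ℝ≥0)) ω - B ((i:ℝ≥0)/(n:ℝ≥0)) ω :=
              sub_nonneg.2 (hBmono ω (hdivle i n))
            rw [abs_of_nonneg hΔ]
            exact mul_le_mul_of_nonneg_right (hC₀ _) hΔ
        _ = C₀ * (B (((n*n : ℕ):ℝ≥0)/(n:ℝ≥0)) ω - 0) := by
            rw [← Finset.mul_sum, htel, hB00]
        _ ≤ C₀ * X ω := by
            rw [sub_zero]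
            exact mul_le_mul_of_nonneg_left (hBleX _ ω) hC0nn
    have hRtend : ∀ ω, Tendsto (fun n => Rn n ω) atTop (𝓝 (Φ (X ω))) := by
      intro ω
      have hc : Continuous fun t : ℝ≥0 => B t ω := by
        apply (hA_cont ω).comp
        exact continuous_id.min continuous_const
      have hm : Monotone fun t : ℝ≥0 => B t ω := hBmono ω
      have h0 : B 0 ω = 0 := by simp [hBdef, hmin0 ω, hA_zero ω]
      have hcst : ∀ t, τ ω ≤ t → B t ω = B (τ ω) ω := by
        intro t ht
        simp only [hBdef, min_eq_right ht, min_self]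
      have hrs := riemann_sum_tendsto φ hφ (fun t => B t ω) hc hm h0 (τ ω) hcst
      have hXB : B (τ ω) ω = X ω := by simp [hBdef, hXdef, min_self]
      rw [hXB] at hrs
      exact hrs
    have hae_pos : ∀ᵐ ω ∂P, 0 < τ ω := by
      rw [ae_iff]
      have hset : {ω | ¬ 0 < τ ω} = {ω | τ ω ≤ 0} := by ext ω; simp [not_lt]
      rw [hset]
      exact hP0
    have hLtend : ∀ᵐ ω ∂P, Tendsto (fun n => Ln n ω) atTop (𝓝 (φ (X ω))) := by
      filter_upwards [hae_pos] with ω hω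
      obtain ⟨N₀, hN₀⟩ := exists_nat_gt ((τ ω : ℝ))
      set N : ℕ := max N₀ 1 with hN
      set k : ℕ → ℕ := fun n => ⌈(n:ℝ≥0) * τ ω⌉₊ with hk
      have hbasic : ∀ n : ℕ, N ≤ n →
          (0:ℝ≥0) < (n:ℝ≥0) ∧ τ ω ≤ (n:ℝ≥0) ∧ 1 ≤ k n ∧ k n ≤ n*n := by
        intro n hn
        have hn1 : 1 ≤ n := le_trans (le_max_right _ _) hn
        have hnpos : (0:ℝ≥0) < (n:ℝ≥0) := by exact_mod_cast Nat.pos_of_ne_zero (by omega)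
        have hτn : τ ω ≤ (n:ℝ≥0) := by
          have hc1 : (N₀:ℝ) ≤ (n:ℝ) := by exact_mod_cast le_trans (le_max_left _ _) hn
          have h1 : (τ ω : ℝ) ≤ (n:ℝ) := le_trans hN₀.le hc1
          exact_mod_cast h1
        have hk1 : 1 ≤ k n := by
          rw [hk]
          simp only
          exact Nat.one_le_iff_ne_zero.2 (by
            intro hcon
            have := Nat.ceil_eq_zero.1 hcon
            exact absurd this (not_le.2 (mul_pos hnpos hω)))
        have hkle : k n ≤ n * n := by
          rw [hk]
          simp only
          apply Nat.ceil_le.2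
          push_cast
          exact mul_le_mul_right hτn _
        exact ⟨hnpos, hτn, hk1, hkle⟩
      have hcond : ∀ n : ℕ, N ≤ n → ∀ i : ℕ,
          (((i:ℝ≥0)/(n:ℝ≥0) < τ ω ∧ τ ω ≤ ((i:ℝ≥0)+1)/(n:ℝ≥0)) ↔ i = k n - 1) := by
        intro n hn i
        obtain ⟨hnpos, hτn, hk1, hkle⟩ := hbasic n hn
        have hnne : (n:ℝ≥0) ≠ 0 := hnpos.ne'
        have h1 : ((i:ℝ≥0)/(n:ℝ≥0) < τ ω) ↔ i < k n := by
          rw [div_lt_iff₀ hnpos, mul_comm (τ ω) ((n:ℝ≥0)), hk]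
          simp only
          exact Iff.symm Nat.lt_ceil
        have h2 : (τ ω ≤ ((i:ℝ≥0)+1)/(n:ℝ≥0)) ↔ k n ≤ i + 1 := by
          rw [le_div_iff₀ hnpos, mul_comm (τ ω) ((n:ℝ≥0)), hk]
          simp only
          rw [show ((i:ℝ≥0)+1) = ((i+1 : ℕ):ℝ≥0) by push_cast; ring]
          exact Iff.symm Nat.ceil_le
        rw [h1, h2]
        omega
      have hLval : ∀ n : ℕ, N ≤ n →
          Ln n ω = φ (A (((k n - 1 : ℕ):ℝ≥0)/(n:ℝ≥0)) ω) := by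
        intro n hn
        obtain ⟨hnpos, hτn, hk1, hkle⟩ := hbasic n hn
        have hmem : k n - 1 ∈ Finset.range (n*n) := Finset.mem_range.2 (by omega)
        rw [hLdef]
        simp only
        rw [Finset.sum_eq_single_of_mem _ hmem (fun j _ hne => by
          rw [if_neg (fun hc => hne ((hcond n hn j).1 hc)), mul_zero]),
          if_pos ((hcond n hn _).2 rfl), mul_one]
      have hctend : Tendsto (fun n : ℕ => (((k n - 1 : ℕ):ℝ≥0)/(n:ℝ≥0)))
          atTop (𝓝 (τ ω)) := by
        rw [← NNReal.tendsto_coe]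
        have hg : Tendsto (fun n : ℕ => (τ ω : ℝ) - 1/(n:ℝ)) atTop (𝓝 (τ ω : ℝ)) := by
          have hconst : Tendsto (fun _ : ℕ => (τ ω : ℝ)) atTop (𝓝 (τ ω : ℝ)) :=
            tendsto_const_nhds
          have h2 := hconst.sub tendsto_one_div_atTop_nhds_zero_nat
          simpa using h2
        apply tendsto_of_tendsto_of_tendsto_of_le_of_le' hg tendsto_const_nhds
        · filter_upwards [eventually_ge_atTop N] with n hn
          obtain ⟨hnpos, hτn, hk1, hkle⟩ := hbasic n hn
          have hnne : (n:ℝ≥0) ≠ 0 := hnpos.ne'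
          have hup : τ ω ≤ (((k n - 1 : ℕ):ℝ≥0) + 1)/(n:ℝ≥0) := by
            rw [le_div_iff₀ hnpos, mul_comm]
            have h1 : (n:ℝ≥0) * τ ω ≤ (k n : ℝ≥0) := Nat.le_ceil _
            have h2 : ((k n : ℕ):ℝ≥0) = ((k n - 1 : ℕ):ℝ≥0) + 1 := by
              rw [show (k n : ℕ) = (k n - 1) + 1 by omega]
              push_cast
              ring
            rw [h2] at h1
            exact h1
          have hcoe : ((τ ω : ℝ)) ≤ (((k n - 1 : ℕ):ℝ≥0)/(n:ℝ≥0) : ℝ≥0) + 1/(n:ℝ) := by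
            have := NNReal.coe_le_coe.2 hup
            rw [NNReal.coe_div, NNReal.coe_add] at this
            push_cast at this ⊢
            rw [add_div] at this
            convert this using 2
            try simp
          have hnR : (0:ℝ) < (n:ℝ) := by exact_mod_cast hnpos
          linarith [hcoe]
        · filter_upwards [eventually_ge_atTop N] with n hn
          obtain ⟨hnpos, hτn, hk1, hkle⟩ := hbasic n hn
          have hnne : (n:ℝ≥0) ≠ 0 := hnpos.ne'
          have hlt : ((k n - 1 : ℕ):ℝ≥0) < (n:ℝ≥0) * τ ω := by
            have hlt' : (k n - 1 : ℕ) < k n := by omega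
            exact Nat.lt_ceil.1 hlt'
          have : ((k n - 1 : ℕ):ℝ≥0)/(n:ℝ≥0) ≤ τ ω := by
            rw [div_le_iff₀ hnpos, mul_comm]
            exact (le_of_lt hlt)
          exact_mod_cast this
      have h1 := ((hA_cont ω).tendsto (τ ω)).comp hctend
      have h2 := (hφ.tendsto _).comp h1
      apply h2.congr'
      filter_upwards [eventually_ge_atTop N] with n hn
      exact (hLval n hn).symm
    have hL2 : Tendsto (fun n => ∫ ω, Ln n ω ∂P) atTop (𝓝 (∫ ω, φ (X ω) ∂P)) :=
      tendsto_integral_of_dominated_convergence (fun _ => C₀) hLmeas (integrable_const C₀)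
        (fun n => ae_of_all _ fun ω => hLbd n ω) hLtend
    have hR2 : Tendsto (fun n => ∫ ω, Rn n ω ∂P) atTop (𝓝 (∫ ω, Φ (X ω) ∂P)) :=
      tendsto_integral_of_dominated_convergence (fun ω => C₀ * X ω) hRmeas
        (hXint.const_mul C₀) (fun n => ae_of_all _ fun ω => hRbd n ω)
        (ae_of_all _ hRtend)
    exact tendsto_nhds_unique (hL2.congr hIeq) hR2
  -- transfer to the pushforward measure and conclude
  set ν : Measure ℝ := P.map X with hνdef
  haveI : IsProbabilityMeasure ν := Measure.isProbabilityMeasure_map hXmeas.aemeasurable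
  have hsupp : ν (Iio 0) = 0 := by
    rw [hνdef, Measure.map_apply hXmeas measurableSet_Iio]
    have : X ⁻¹' Iio 0 = ∅ := by
      rw [Set.eq_empty_iff_forall_notMem]
      intro ω hω
      exact absurd (hAnn (τ ω) ω) (by simpa using hω)
    rw [this, measure_empty]
  have hνkey : ∀ φ : ℝ → ℝ, Continuous φ → (∃ C, ∀ x, |φ x| ≤ C) →
      ∫ x, φ x ∂ν = ∫ x, (∫ u in (0:ℝ)..x, φ u) ∂ν := by
    intro φ hφ hbd
    have hΦc : Continuous fun x => ∫ u in (0:ℝ)..x, φ u :=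
      intervalIntegral.continuous_primitive (fun a b => hφ.intervalIntegrable a b) 0
    rw [hνdef, integral_map hXmeas.aemeasurable hφ.aestronglyMeasurable,
      integral_map hXmeas.aemeasurable hΦc.aestronglyMeasurable]
    exact hkey φ hφ hbd
  have hode := cdf_ode ν hsupp hνkey
  intro t
  have := hode (t : ℝ) t.coe_nonneg
  rw [hνdef, Measure.map_apply hXmeas measurableSet_Iic] at this
  convert this using 2
  rfl
end

section
/- Define the right-continuous generalized inverse A^{-1}(s) = inf{t ≥ 0 : A_t ≥ s}. Then A^{-1}(A_τ) = τ almost surely; equivalently, inf{t ≥ 0 : A_t ≥ A_τ} = τ almost surely. -/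
open MeasureTheory ProbabilityTheory Filter Set
open scoped NNReal ENNReal

namespace CompensatorAux

/-- running maximum of the first `k` values of `v`, at least `0`. -/
noncomputable def maxOf (v : ℕ → ℝ) : ℕ → ℝ
  | 0 => 0
  | (k+1) => max (maxOf v k) (v k)

lemma maxOf_nonneg (v : ℕ → ℝ) : ∀ k, 0 ≤ maxOf v k
  | 0 => le_refl 0
  | (k+1) => le_trans (maxOf_nonneg v k) (le_max_left _ _)

lemma le_maxOf (v : ℕ → ℝ) {i k : ℕ} (h : i < k) : v i ≤ maxOf v k := by
  induction k with
  | zero => omega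
  | succ k ih =>
    rcases Nat.lt_succ_iff_lt_or_eq.1 h with h | h
    · exact le_trans (ih h) (le_max_left _ _)
    · subst h; exact le_max_right _ _

lemma maxOf_le (v : ℕ → ℝ) {k : ℕ} {c : ℝ} (hc : 0 ≤ c) (h : ∀ i < k, v i ≤ c) :
    maxOf v k ≤ c := by
  induction k with
  | zero => exact hc
  | succ k ih =>
    exact max_le (ih fun i hi => h i (Nat.lt_succ_of_lt hi)) (h k (Nat.lt_succ_self k))

lemma measurable_maxOf {Ω : Type*} [MeasurableSpace Ω] (v : ℕ → Ω → ℝ)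
    (hv : ∀ i, Measurable (v i)) (k : ℕ) :
    Measurable (fun ω => maxOf (fun i => v i ω) k) := by
  induction k with
  | zero => simp only [maxOf]; exact measurable_const
  | succ k ih => exact Measurable.max ih (hv k)

lemma exists_partition_index {k : ℕ} (t : ℕ → ℝ≥0) (ht : Monotone t) {x : ℝ≥0}
    (h0 : t 0 < x) (hk : x ≤ t k) : ∃ i < k, t i < x ∧ x ≤ t (i + 1) := by
  classical
  have hex : ∃ j, x ≤ t j := ⟨k, hk⟩
  have hms : x ≤ t (Nat.find hex) := Nat.find_spec hex
  have hm0 : Nat.find hex ≠ 0 := by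
    intro h
    rw [h] at hms
    exact absurd hms (not_le_of_gt h0)
  obtain ⟨i, hi⟩ : ∃ i, Nat.find hex = i + 1 :=
    ⟨Nat.find hex - 1, (Nat.succ_pred_eq_of_pos (Nat.pos_of_ne_zero hm0)).symm⟩
  have hmk : i + 1 ≤ k := hi ▸ Nat.find_le hk
  refine ⟨i, by omega, ?_, by rw [← hi]; exact hms⟩
  exact lt_of_not_ge (Nat.find_min hex (by omega))

lemma sum_indicator_increments_le {k : ℕ} (hk : 1 ≤ k) (a b : ℕ → ℝ)
    (ha : Monotone a) (hb : Monotone b)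
    (hab : ∀ i, b (i+1) - b i ≤ a (i+1) - a i)
    {ε osc : ℝ} (hosc : ∀ i < k, a (i+1) - a i ≤ osc) (hε : 0 ≤ ε) (hosc0 : 0 ≤ osc) :
    ∑ i ∈ Finset.range k, (if a i ≤ a 0 + ε then (1:ℝ) else 0) * (b (i+1) - b i)
      ≤ min (ε + osc) (b k - b 0) := by
  classical
  set c := a 0 + ε with hc
  obtain ⟨m, hmk, hiff, hlast⟩ :
      ∃ m, m ≤ k ∧ (∀ i < k, (a i ≤ c ↔ i < m)) ∧ (∀ r, m = r + 1 → a r ≤ c) := by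
    by_cases hall : ∀ i < k, a i ≤ c
    · exact ⟨k, le_rfl, fun i hi => ⟨fun _ => hi, fun _ => hall i hi⟩,
        fun r hr => hall r (by omega)⟩
    · push_neg at hall
      obtain ⟨i0, hi0k, hi0⟩ := hall
      have hex : ∃ j, c < a j := ⟨i0, hi0⟩
      refine ⟨Nat.find hex, le_trans (Nat.find_le hi0) hi0k.le, fun i _ => ?_, fun r hr => ?_⟩
      · constructor
        · intro hi
          by_contra hlt
          push_neg at hlt
          exact absurd (le_trans (ha hlt) hi) (not_le_of_gt (Nat.find_spec hex))
        · intro hi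
          exact not_lt.1 (Nat.find_min hex hi)
      · exact not_lt.1 (Nat.find_min hex (by omega))
  have hfilter : (Finset.range k).filter (fun i => i < m) = Finset.range m := by
    ext i
    simp only [Finset.mem_filter, Finset.mem_range]
    omega
  have hsum : ∑ i ∈ Finset.range k, (if a i ≤ c then (1:ℝ) else 0) * (b (i+1) - b i)
      = b m - b 0 := by
    have h1 : ∀ i ∈ Finset.range k,
        (if a i ≤ c then (1:ℝ) else 0) * (b (i+1) - b i)
          = if i < m then b (i+1) - b i else 0 := by
      intro i hi
      rw [Finset.mem_range] at hi
      by_cases h : i < m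
      · simp [h, (hiff i hi).2 h]
      · have hni : ¬ a i ≤ c := fun hc' => h ((hiff i hi).1 hc')
        simp [h, hni]
    rw [Finset.sum_congr rfl h1, Finset.sum_ite, Finset.sum_const_zero, add_zero, hfilter,
      Finset.sum_range_sub]
  rw [hsum]
  refine le_min ?_ (sub_le_sub_right (hb hmk) _)
  rcases m with - | r
  · simp only [sub_self]
    linarith
  · have key : ∀ j, b j - b 0 ≤ a j - a 0 := by
      intro j
      induction j with
      | zero => simp
      | succ j ih => have := hab j; linarith
    have h1 := key (r + 1)
    have h2 : a r ≤ c := hlast r rfl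
    have h3 : a (r+1) - a r ≤ osc := hosc r (by omega)
    rw [hc] at h2
    linarith

end CompensatorAux

section Mart

variable {Ω : Type*} {m0 : MeasurableSpace Ω} {P : Measure Ω} [IsProbabilityMeasure P]
  {F : Filtration ℝ≥0 m0} {τ : Ω → ℝ≥0} {A : ℝ≥0 → Ω → ℝ}

lemma integrable_indicator_tau (hτ : IsStoppingTime F (fun ω => (τ ω : WithTop ℝ≥0))) (t : ℝ≥0) :
    Integrable (fun ω => (if τ ω ≤ t then (1 : ℝ) else 0)) P := by
  have : (fun ω => (if τ ω ≤ t then (1 : ℝ) else 0))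
      = Set.indicator {ω | τ ω ≤ t} (fun _ => (1:ℝ)) := by
    funext ω
    by_cases h : τ ω ≤ t <;> simp [Set.indicator_apply, h]
  rw [this]
  exact (integrable_const (1:ℝ)).indicator (F.le t _ (by simpa only [WithTop.coe_le_coe] using hτ t))

lemma integrable_stopped (hτ : IsStoppingTime F (fun ω => (τ ω : WithTop ℝ≥0)))
    (hM : Martingale (fun t ω => (if τ ω ≤ t then (1 : ℝ) else 0) - A (min t (τ ω)) ω) F P)
    (t : ℝ≥0) : Integrable (fun ω => A (min t (τ ω)) ω) P := by
  have h := (integrable_indicator_tau (P := P) hτ t).sub (hM.integrable t)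
  exact h.congr (Filter.Eventually.of_forall fun ω => by simp only [Pi.sub_apply]; ring)

lemma stepA (hτ : IsStoppingTime F (fun ω => (τ ω : WithTop ℝ≥0)))
    (hM : Martingale (fun t ω => (if τ ω ≤ t then (1 : ℝ) else 0) - A (min t (τ ω)) ω) F P)
    {s t : ℝ≥0} (hst : s ≤ t) {B : Set Ω} (hB : MeasurableSet[F s] B) :
    ∫ ω in B, (A (min t (τ ω)) ω - A (min s (τ ω)) ω) ∂P
      = (P (B ∩ {ω | s < τ ω ∧ τ ω ≤ t})).toReal := by
  have hfs := integrable_indicator_tau (P := P) hτ s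
  have hft := integrable_indicator_tau (P := P) hτ t
  have hgs := integrable_stopped hτ hM s
  have hgt := integrable_stopped hτ hM t
  have hmart := hM.setIntegral_eq hst hB
  have hC : MeasurableSet {ω | s < τ ω ∧ τ ω ≤ t} := by
    have : {ω | s < τ ω ∧ τ ω ≤ t} = {ω | τ ω ≤ t} \ {ω | τ ω ≤ s} := by
      ext ω
      simp only [Set.mem_setOf_eq, Set.mem_diff, not_le]
      tauto
    rw [this]
    exact (F.le t _ (by simpa only [WithTop.coe_le_coe] using hτ t)).diff (F.le s _ (by simpa only [WithTop.coe_le_coe] using hτ s))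
  have hind : ∀ ω, (if τ ω ≤ t then (1:ℝ) else 0) - (if τ ω ≤ s then (1:ℝ) else 0)
      = Set.indicator {ω | s < τ ω ∧ τ ω ≤ t} (fun _ => (1:ℝ)) ω := by
    intro ω
    by_cases h1 : τ ω ≤ s
    · have h2 : τ ω ≤ t := le_trans h1 hst
      simp [Set.indicator_apply, h1, h2, not_lt.2 h1]
    · by_cases h2 : τ ω ≤ t <;>
        simp [Set.indicator_apply, h1, h2, lt_of_not_ge h1]
  calc ∫ ω in B, (A (min t (τ ω)) ω - A (min s (τ ω)) ω) ∂P
      = ∫ ω in B, ((if τ ω ≤ t then (1:ℝ) else 0) - (if τ ω ≤ s then (1:ℝ) else 0)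
          - (((if τ ω ≤ t then (1:ℝ) else 0) - A (min t (τ ω)) ω)
            - ((if τ ω ≤ s then (1:ℝ) else 0) - A (min s (τ ω)) ω))) ∂P := by
        congr 1
        funext ω
        ring
    _ = ∫ ω in B, ((if τ ω ≤ t then (1:ℝ) else 0) - (if τ ω ≤ s then (1:ℝ) else 0)) ∂P
          - (∫ ω in B, ((if τ ω ≤ t then (1:ℝ) else 0) - A (min t (τ ω)) ω) ∂P
            - ∫ ω in B, ((if τ ω ≤ s then (1:ℝ) else 0) - A (min s (τ ω)) ω) ∂P) := by
        have hI1 : Integrable (fun ω => (if τ ω ≤ t then (1:ℝ) else 0)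
            - (if τ ω ≤ s then (1:ℝ) else 0)) P := hft.sub hfs
        have hI2 : Integrable (fun ω => ((if τ ω ≤ t then (1:ℝ) else 0) - A (min t (τ ω)) ω)
            - ((if τ ω ≤ s then (1:ℝ) else 0) - A (min s (τ ω)) ω)) P :=
          (hM.integrable t).sub (hM.integrable s)
        rw [integral_sub hI1.integrableOn hI2.integrableOn,
          integral_sub ((hM.integrable t).integrableOn) ((hM.integrable s).integrableOn)]
    _ = ∫ ω in B, ((if τ ω ≤ t then (1:ℝ) else 0) - (if τ ω ≤ s then (1:ℝ) else 0)) ∂P := by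
        rw [← hmart]
        ring
    _ = ∫ ω in B, Set.indicator {ω | s < τ ω ∧ τ ω ≤ t} (fun _ => (1:ℝ)) ω ∂P := by
        congr 1
        funext ω
        exact hind ω
    _ = ∫ _ω in B ∩ {ω | s < τ ω ∧ τ ω ≤ t}, (1:ℝ) ∂P := setIntegral_indicator hC
    _ = (P (B ∩ {ω | s < τ ω ∧ τ ω ≤ t})).toReal := by
        rw [setIntegral_const]
        simp
        rfl

end Mart

namespace CompensatorAux

/-- uniform partition points of `[q, n]` into `k+1` pieces -/
noncomputable def pt (q n : ℝ≥0) (k i : ℕ) : ℝ≥0 := q + i * ((n - q) / (k + 1))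

lemma pt_zero (q n : ℝ≥0) (k : ℕ) : pt q n k 0 = q := by simp [pt]

lemma pt_mono (q n : ℝ≥0) (k : ℕ) : Monotone (pt q n k) := fun i j hij =>
  add_le_add_right (mul_le_mul_left (by exact_mod_cast hij) _) _

lemma pt_ge (q n : ℝ≥0) (k i : ℕ) : q ≤ pt q n k i := le_self_add

lemma pt_last (q n : ℝ≥0) (hqn : q ≤ n) (k : ℕ) : pt q n k (k + 1) = n := by
  have hne : ((k : ℝ≥0) + 1) ≠ 0 := by positivity
  rw [pt]
  push_cast
  rw [mul_comm, div_mul_cancel₀ _ hne, add_tsub_cancel_of_le hqn]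

lemma pt_le (q n : ℝ≥0) (hqn : q ≤ n) {k i : ℕ} (hi : i ≤ k + 1) : pt q n k i ≤ n := by
  exact (pt_mono q n k hi).trans_eq (pt_last q n hqn k)

lemma pt_mem (q n : ℝ≥0) (hqn : q ≤ n) {k i : ℕ} (hi : i ≤ k + 1) :
    pt q n k i ∈ Set.Icc q n := ⟨pt_ge q n k i, pt_le q n hqn hi⟩

lemma pt_dist (q n : ℝ≥0) (k i : ℕ) :
    dist (pt q n k (i + 1)) (pt q n k i) = ((n - q : ℝ≥0) : ℝ) / ((k : ℝ) + 1) := by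
  rw [NNReal.dist_eq]
  have h : ((pt q n k (i + 1) : ℝ≥0) : ℝ) - ((pt q n k i : ℝ≥0) : ℝ)
      = ((n - q : ℝ≥0) : ℝ) / ((k : ℝ) + 1) := by
    simp only [pt]
    push_cast
    ring
  rw [h, abs_of_nonneg (by positivity)]

end CompensatorAux

open CompensatorAux

section StepB

variable {Ω : Type*} {m0 : MeasurableSpace Ω} {P : Measure Ω} [IsProbabilityMeasure P]
  {F : Filtration ℝ≥0 m0} {τ : Ω → ℝ≥0} {A : ℝ≥0 → Ω → ℝ}

lemma stepB (hτ : IsStoppingTime F (fun ω => (τ ω : WithTop ℝ≥0)))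
    (hA_adapted : Adapted F A)
    (hA_cont : ∀ ω, Continuous fun t => A t ω)
    (hA_mono : ∀ ω, Monotone fun t => A t ω)
    (hM : Martingale (fun t ω => (if τ ω ≤ t then (1 : ℝ) else 0) - A (min t (τ ω)) ω) F P)
    (q n : ℝ≥0) (hqn : q ≤ n) {ε : ℝ} (hε : 0 < ε) :
    P {ω | q < τ ω ∧ τ ω ≤ n ∧ A (τ ω) ω ≤ A q ω + ε} ≤ ENNReal.ofReal ε := by
  classical
  -- abbreviations
  set D : Ω → ℝ := fun ω => A (min n (τ ω)) ω - A (min q (τ ω)) ω with hD_def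
  set osc : ℕ → Ω → ℝ :=
    fun k ω => maxOf (fun i => A (pt q n k (i + 1)) ω - A (pt q n k i) ω) (k + 1) with hosc_def
  set h : ℕ → Ω → ℝ := fun k ω => min (ε + osc k ω) (D ω) with hh_def
  have hD_int : Integrable D P :=
    (integrable_stopped hτ hM n).sub (integrable_stopped hτ hM q)
  have hD_nonneg : ∀ ω, 0 ≤ D ω := fun ω =>
    sub_nonneg.2 (hA_mono ω (min_le_min hqn le_rfl))
  have hosc_meas : ∀ k, Measurable (osc k) := fun k =>
    measurable_maxOf _ (fun i => (show Measurable (A _) from (hA_adapted _).mono (F.le _) le_rfl).sub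
      (show Measurable (A _) from (hA_adapted _).mono (F.le _) le_rfl)) (k + 1)
  have hosc_nonneg : ∀ k ω, 0 ≤ osc k ω := fun k ω => maxOf_nonneg _ _
  have hh_aesm : ∀ k, AEStronglyMeasurable (h k) P := fun k => by
    have h1 : AEMeasurable (fun ω => ε + osc k ω) P :=
      (measurable_const.add (hosc_meas k)).aemeasurable
    exact (aestronglyMeasurable_iff_aemeasurable).2 (h1.min hD_int.aemeasurable)
  have hh_nonneg : ∀ k ω, 0 ≤ h k ω := fun k ω =>
    le_min (by have := hosc_nonneg k ω; linarith) (hD_nonneg ω)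
  have hh_le_D : ∀ k ω, h k ω ≤ D ω := fun k ω => min_le_right _ _
  have hh_bound : ∀ k, ∀ᵐ ω ∂P, ‖h k ω‖ ≤ D ω := fun k =>
    Filter.Eventually.of_forall fun ω => by
      rw [Real.norm_eq_abs, abs_of_nonneg (hh_nonneg k ω)]
      exact hh_le_D k ω
  have hh_int : ∀ k, Integrable (h k) P := fun k =>
    Integrable.mono' hD_int (hh_aesm k) (hh_bound k)
  -- measurability of the partition events
  have hB_meas : ∀ k i, MeasurableSet[F (pt q n k i)]
      {ω | A (pt q n k i) ω ≤ A q ω + ε} := by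
    intro k i
    exact measurableSet_le (hA_adapted _)
      ((((hA_adapted q).mono (F.mono (pt_ge q n k i)) le_rfl)).add_const ε)
  -- the key estimate for each k
  have key : ∀ k : ℕ,
      P {ω | q < τ ω ∧ τ ω ≤ n ∧ A (τ ω) ω ≤ A q ω + ε}
        ≤ ENNReal.ofReal (∫ ω, h k ω ∂P) := by
    intro k
    set Bk : ℕ → Set Ω := fun i => {ω | A (pt q n k i) ω ≤ A q ω + ε} with hBk
    set Ck : ℕ → Set Ω :=
      fun i => Bk i ∩ {ω | pt q n k i < τ ω ∧ τ ω ≤ pt q n k (i + 1)} with hCk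
    have step1 : {ω | q < τ ω ∧ τ ω ≤ n ∧ A (τ ω) ω ≤ A q ω + ε}
        ⊆ ⋃ i ∈ Finset.range (k + 1), Ck i := by
      intro ω hω
      obtain ⟨h1, h2, h3⟩ := hω
      obtain ⟨i, hik, hlt, hle⟩ := exists_partition_index (pt q n k) (pt_mono q n k)
        (x := τ ω) (by rw [pt_zero]; exact h1) (by rw [pt_last q n hqn k]; exact h2)
      refine Set.mem_biUnion (Finset.mem_range.2 hik) ⟨?_, hlt, hle⟩
      exact le_trans (hA_mono ω hlt.le) h3
    have step2 : P {ω | q < τ ω ∧ τ ω ≤ n ∧ A (τ ω) ω ≤ A q ω + ε}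
        ≤ ∑ i ∈ Finset.range (k + 1), P (Ck i) :=
      le_trans (measure_mono step1) (measure_biUnion_finset_le _ _)
    have step3 : ∀ i, P (Ck i) = ENNReal.ofReal
        (∫ ω in Bk i, (A (min (pt q n k (i+1)) (τ ω)) ω - A (min (pt q n k i) (τ ω)) ω) ∂P) := by
      intro i
      rw [stepA hτ hM (pt_mono q n k (Nat.le_succ i)) (hB_meas k i)]
      exact (ENNReal.ofReal_toReal (measure_ne_top _ _)).symm
    have hint_nonneg : ∀ i, 0 ≤
        ∫ ω in Bk i, (A (min (pt q n k (i+1)) (τ ω)) ω - A (min (pt q n k i) (τ ω)) ω) ∂P := by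
      intro i
      rw [stepA hτ hM (pt_mono q n k (Nat.le_succ i)) (hB_meas k i)]
      exact ENNReal.toReal_nonneg
    -- the sum of set integrals is the integral of Y k
    have hBk_m0 : ∀ i, MeasurableSet (Bk i) := fun i => F.le _ _ (hB_meas k i)
    have hincr_int : ∀ i : ℕ, Integrable
        (fun ω => A (min (pt q n k (i+1)) (τ ω)) ω - A (min (pt q n k i) (τ ω)) ω) P :=
      fun i => (integrable_stopped hτ hM _).sub (integrable_stopped hτ hM _)
    have step4 : ∑ i ∈ Finset.range (k + 1),
        ∫ ω in Bk i, (A (min (pt q n k (i+1)) (τ ω)) ω - A (min (pt q n k i) (τ ω)) ω) ∂P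
        = ∫ ω, (∑ i ∈ Finset.range (k + 1), Set.indicator (Bk i)
            (fun ω' => A (min (pt q n k (i+1)) (τ ω')) ω' - A (min (pt q n k i) (τ ω')) ω') ω) ∂P := by
      rw [integral_finset_sum _ (fun i _ => (hincr_int i).indicator (hBk_m0 i))]
      exact Finset.sum_congr rfl fun i _ => (integral_indicator (hBk_m0 i)).symm
    -- pointwise bound of Y k by h k
    have step5 : ∀ ω, (∑ i ∈ Finset.range (k + 1), Set.indicator (Bk i)
            (fun ω' => A (min (pt q n k (i+1)) (τ ω')) ω' - A (min (pt q n k i) (τ ω')) ω') ω)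
          ≤ h k ω := by
      intro ω
      have hconv : ∀ i ∈ Finset.range (k + 1), Set.indicator (Bk i)
            (fun ω' => A (min (pt q n k (i+1)) (τ ω')) ω' - A (min (pt q n k i) (τ ω')) ω') ω
          = (if (fun j => A (pt q n k j) ω) i ≤ (fun j => A (pt q n k j) ω) 0 + ε then (1:ℝ) else 0)
            * ((fun j => A (min (pt q n k j) (τ ω)) ω) (i+1) - (fun j => A (min (pt q n k j) (τ ω)) ω) i) := by
        intro i _
        rw [Set.indicator_apply]
        by_cases hmem : ω ∈ Bk i
        · rw [if_pos hmem, if_pos (by simpa only [pt_zero, Set.mem_setOf_eq, hBk] using hmem), one_mul]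
        · rw [if_neg hmem, if_neg (by simpa only [pt_zero, Set.mem_setOf_eq, hBk] using hmem), zero_mul]
      rw [Finset.sum_congr rfl hconv]
      have hbound := sum_indicator_increments_le (k := k + 1) (Nat.le_add_left 1 k)
        (fun j => A (pt q n k j) ω) (fun j => A (min (pt q n k j) (τ ω)) ω)
        (fun i j hij => hA_mono ω (pt_mono q n k hij))
        (fun i j hij => hA_mono ω (min_le_min (pt_mono q n k hij) le_rfl))
        (fun i => by
          show A (min (pt q n k (i+1)) (τ ω)) ω - A (min (pt q n k i) (τ ω)) ω
            ≤ A (pt q n k (i+1)) ω - A (pt q n k i) ω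
          rcases le_total (τ ω) (pt q n k i) with hcase | hcase
          · rw [min_eq_right hcase, min_eq_right (hcase.trans (pt_mono q n k (Nat.le_succ i)))]
            have := hA_mono ω (pt_mono q n k (Nat.le_succ i))
            linarith
          · rw [min_eq_left hcase]
            have := hA_mono ω (min_le_left (pt q n k (i+1)) (τ ω))
            linarith)
        (osc := osc k ω)
        (fun i hik => by
          show A (pt q n k (i+1)) ω - A (pt q n k i) ω ≤ osc k ω
          simp only [hosc_def]
          exact le_maxOf (fun j => A (pt q n k (j + 1)) ω - A (pt q n k j) ω) hik) hε.le (hosc_nonneg k ω)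
      refine le_trans hbound ?_
      rw [hh_def, hosc_def, hD_def]
      simp only [pt_zero, pt_last q n hqn k]
      exact le_rfl
    -- put things together
    have step6 : ∫ ω, (∑ i ∈ Finset.range (k + 1), Set.indicator (Bk i)
            (fun ω' => A (min (pt q n k (i+1)) (τ ω')) ω' - A (min (pt q n k i) (τ ω')) ω') ω) ∂P
          ≤ ∫ ω, h k ω ∂P := by
      refine integral_mono_of_nonneg ?_ (hh_int k) (Filter.Eventually.of_forall step5)
      refine Filter.Eventually.of_forall fun ω => ?_
      refine Finset.sum_nonneg fun i _ => ?_
      rw [Set.indicator_apply]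
      by_cases hmem : ω ∈ Bk i
      · rw [if_pos hmem]
        have := hA_mono ω (min_le_min (pt_mono q n k (Nat.le_succ i)) (le_refl (τ ω)))
        linarith
      · rw [if_neg hmem]
    calc P {ω | q < τ ω ∧ τ ω ≤ n ∧ A (τ ω) ω ≤ A q ω + ε}
        ≤ ∑ i ∈ Finset.range (k + 1), P (Ck i) := step2
      _ = ENNReal.ofReal (∑ i ∈ Finset.range (k + 1),
            ∫ ω in Bk i, (A (min (pt q n k (i+1)) (τ ω)) ω - A (min (pt q n k i) (τ ω)) ω) ∂P) := by
          rw [ENNReal.ofReal_sum_of_nonneg (fun i _ => hint_nonneg i)]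
          exact Finset.sum_congr rfl fun i _ => step3 i
      _ ≤ ENNReal.ofReal (∫ ω, h k ω ∂P) := by
          rw [step4]
          exact ENNReal.ofReal_le_ofReal step6
  -- oscillation tends to zero pointwise
  have osc_tendsto : ∀ ω, Filter.Tendsto (fun k => osc k ω) atTop (nhds 0) := by
    intro ω
    rw [Metric.tendsto_atTop]
    intro η hη
    have hu := (isCompact_Icc (a := q) (b := n)).uniformContinuousOn_of_continuous
      ((hA_cont ω).continuousOn)
    rw [Metric.uniformContinuousOn_iff_le] at hu
    obtain ⟨dd, hdd, hud⟩ := hu (η / 2) (by positivity)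
    have htend : Filter.Tendsto (fun k : ℕ => ((n - q : ℝ≥0) : ℝ) / ((k : ℝ) + 1)) atTop (nhds 0) := by
      have := (tendsto_const_div_atTop_nhds_zero_nat ((n - q : ℝ≥0) : ℝ)).comp
        (tendsto_add_atTop_nat 1)
      refine this.congr fun k => ?_
      simp only [Function.comp_apply]
      push_cast
      ring
    have hev : ∀ᶠ k : ℕ in atTop, ((n - q : ℝ≥0) : ℝ) / ((k : ℝ) + 1) ≤ dd :=
      htend.eventually (eventually_le_nhds hdd)
    obtain ⟨N, hN⟩ := Filter.eventually_atTop.1 hev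
    refine ⟨N, fun k hk => ?_⟩
    rw [Real.dist_eq, sub_zero, abs_of_nonneg (hosc_nonneg k ω)]
    have hosc_le : osc k ω ≤ η / 2 := by
      refine maxOf_le _ (by positivity) fun i hik => ?_
      have h1 : A (pt q n k (i+1)) ω - A (pt q n k i) ω
          ≤ dist (A (pt q n k (i+1)) ω) (A (pt q n k i) ω) := by
        rw [Real.dist_eq]
        exact le_abs_self _
      refine le_trans h1 (hud _ (pt_mem q n hqn (by omega)) _ (pt_mem q n hqn (by omega)) ?_)
      rw [pt_dist]
      exact hN k hk
    linarith
  -- pass to the limit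
  have hL_int : Integrable (fun ω => min ε (D ω)) P := by
    refine Integrable.mono' hD_int ?_ ?_
    · exact (aestronglyMeasurable_iff_aemeasurable).2
        (aemeasurable_const.min hD_int.aemeasurable)
    · refine Filter.Eventually.of_forall fun ω => ?_
      rw [Real.norm_eq_abs, abs_of_nonneg (le_min hε.le (hD_nonneg ω))]
      exact min_le_right _ _
  have htendI : Filter.Tendsto (fun k => ∫ ω, h k ω ∂P) atTop (nhds (∫ ω, min ε (D ω) ∂P)) := by
    refine tendsto_integral_of_dominated_convergence D hh_aesm hD_int hh_bound ?_
    refine Filter.Eventually.of_forall fun ω => ?_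
    have h1 : Filter.Tendsto (fun k => ε + osc k ω) atTop (nhds ε) := by
      have := tendsto_const_nhds (x := ε) (f := atTop (α := ℕ)) |>.add (osc_tendsto ω)
      simpa using this
    exact h1.min tendsto_const_nhds
  have hlim : Filter.Tendsto (fun k => ENNReal.ofReal (∫ ω, h k ω ∂P)) atTop
      (nhds (ENNReal.ofReal (∫ ω, min ε (D ω) ∂P))) := ENNReal.tendsto_ofReal htendI
  refine le_trans (ge_of_tendsto' hlim key) ?_
  refine ENNReal.ofReal_le_ofReal ?_
  calc ∫ ω, min ε (D ω) ∂P ≤ ∫ _ω, ε ∂P :=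
        integral_mono hL_int (integrable_const ε) fun ω => min_le_left _ _
    _ = ε := by simp

end StepB

/-- With the compensator setup (the process
`M t = 1_{t ≥ τ} - A_{t ∧ τ}` is a martingale, `A` continuous nondecreasing, `A 0 = 0`,
`P(τ > 0) = 1`), the right-continuous generalized inverse
`A⁻¹(s) = inf {t ≥ 0 : A t ≥ s}` satisfies `A⁻¹(A_τ) = τ` almost surely, i.e.
`inf {t ≥ 0 : A t ≥ A_τ} = τ` a.s. -/
theorem generalized_inverse_of_compensator_at_tau
    {Ω : Type*} {m0 : MeasurableSpace Ω} {P : Measure Ω} [IsProbabilityMeasure P]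
    (F : Filtration ℝ≥0 m0) (τ : Ω → ℝ≥0) (A : ℝ≥0 → Ω → ℝ)
    (hτ : IsStoppingTime F (fun ω => (τ ω : WithTop ℝ≥0)))
    (hτ_pos : P {ω | 0 < τ ω} = 1)
    (hA_adapted : Adapted F A)
    (hA_cont : ∀ ω, Continuous fun t => A t ω)
    (hA_mono : ∀ ω, Monotone fun t => A t ω)
    (hA_zero : ∀ ω, A 0 ω = 0)
    (hM : Martingale (fun t ω => (if τ ω ≤ t then (1 : ℝ) else 0) - A (min t (τ ω)) ω) F P) :
    ∀ᵐ ω ∂P, sInf {t : ℝ≥0 | A (τ ω) ω ≤ A t ω} = τ ω := by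
  classical
  have hN : P {ω | ∃ s, s < τ ω ∧ A (τ ω) ω ≤ A s ω} = 0 := by
    have hsub : {ω | ∃ s, s < τ ω ∧ A (τ ω) ω ≤ A s ω} ⊆ ⋃ (r : ℚ) (n : ℕ), ⋂ (m : ℕ),
        {ω | Real.toNNReal r < τ ω ∧ τ ω ≤ (n : ℝ≥0) ∧
          A (τ ω) ω ≤ A (Real.toNNReal r) ω + 1 / ((m : ℝ) + 1)} := by
      intro ω hω
      obtain ⟨s, hs, hA⟩ := hω
      obtain ⟨r, hr1, hr2⟩ := exists_rat_btwn (show (s : ℝ) < (τ ω : ℝ) from hs)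
      obtain ⟨n, hn⟩ := exists_nat_ge (τ ω)
      refine Set.mem_iUnion.2 ⟨r, Set.mem_iUnion.2 ⟨n, Set.mem_iInter.2 fun m => ?_⟩⟩
      have hr0 : (0 : ℝ) ≤ (r : ℝ) := le_trans s.coe_nonneg hr1.le
      have hq : (Real.toNNReal (r : ℝ) : ℝ) = (r : ℝ) := Real.coe_toNNReal _ hr0
      have hqτ : Real.toNNReal (r : ℝ) < τ ω := by
        rw [← NNReal.coe_lt_coe, hq]; exact hr2
      have hsq : s ≤ Real.toNNReal (r : ℝ) := by
        rw [← NNReal.coe_le_coe, hq]; exact hr1.le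
      refine ⟨hqτ, hn, ?_⟩
      have h1 : A (τ ω) ω ≤ A (Real.toNNReal (r : ℝ)) ω := le_trans hA (hA_mono ω hsq)
      have hpos : (0 : ℝ) < 1 / ((m : ℝ) + 1) := by positivity
      linarith
    refine le_antisymm (le_trans (measure_mono hsub) (le_of_eq ?_)) zero_le
    refine measure_iUnion_null fun r => measure_iUnion_null fun n => ?_
    by_cases hqn : Real.toNNReal (r : ℝ) ≤ (n : ℝ≥0)
    · have hm : ∀ m : ℕ, P (⋂ (m' : ℕ),
          {ω | Real.toNNReal r < τ ω ∧ τ ω ≤ (n : ℝ≥0) ∧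
            A (τ ω) ω ≤ A (Real.toNNReal r) ω + 1 / ((m' : ℝ) + 1)})
          ≤ ENNReal.ofReal (1 / ((m : ℝ) + 1)) := fun m =>
        le_trans (measure_mono (Set.iInter_subset _ m))
          (stepB hτ hA_adapted hA_cont hA_mono hM _ _ hqn (by positivity))
      have htend : Filter.Tendsto (fun m : ℕ => ENNReal.ofReal (1 / ((m : ℝ) + 1))) atTop
          (nhds 0) := by
        have := ENNReal.tendsto_ofReal tendsto_one_div_add_atTop_nhds_zero_nat
        simpa using this
      exact le_antisymm (ge_of_tendsto' htend hm) zero_le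
    · have hempty : (⋂ (m' : ℕ),
          {ω | Real.toNNReal r < τ ω ∧ τ ω ≤ (n : ℝ≥0) ∧
            A (τ ω) ω ≤ A (Real.toNNReal r) ω + 1 / ((m' : ℝ) + 1)}) = (∅ : Set Ω) := by
        refine Set.eq_empty_of_forall_notMem fun ω hω => ?_
        obtain ⟨h1, h2, -⟩ := Set.mem_iInter.1 hω 0
        exact hqn (le_trans h1.le h2)
      rw [hempty, measure_empty]
  have hae : ∀ᵐ ω ∂P, ω ∉ {ω | ∃ s, s < τ ω ∧ A (τ ω) ω ≤ A s ω} :=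
    measure_eq_zero_iff_ae_notMem.1 hN
  filter_upwards [hae] with ω hω
  refine le_antisymm (csInf_le' (show A (τ ω) ω ≤ A (τ ω) ω from le_rfl)) ?_
  refine le_csInf ⟨τ ω, show A (τ ω) ω ≤ A (τ ω) ω from le_rfl⟩ fun b hb => ?_
  by_contra hlt
  push_neg at hlt
  exact hω ⟨b, hlt, hb⟩
end

section
/- Let R be a stopping time (allowed to take the value +∞) such that, almost surely on the event {R < ∞}, one has R < τ and A_R = A_τ. Then P(R < ∞) = 0. -/
open MeasureTheory ProbabilityTheory Filter Set
open scoped NNReal ENNReal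

/-- Auxiliary lemma: for `s ≤ t`, the event `{R ≤ s} ∩ {s < τ ≤ t}` is null. -/
lemma aux_null_piece
    {Ω : Type*} {m0 : MeasurableSpace Ω} {P : Measure Ω} [IsProbabilityMeasure P]
    (F : Filtration ℝ≥0 m0) (τ : Ω → ℝ≥0) (A : ℝ≥0 → Ω → ℝ)
    (hτ : IsStoppingTime F (fun ω => (τ ω : WithTop ℝ≥0)))
    (hA_mono : ∀ ω, Monotone fun t => A t ω)
    (hM : Martingale (fun t ω => (if τ ω ≤ t then (1 : ℝ) else 0) - A (min t (τ ω)) ω) F P)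
    (R : Ω → ℝ≥0∞)
    (hR : ∀ t : ℝ≥0, MeasurableSet[F t] {ω | R ω ≤ (t : ℝ≥0∞)})
    (hRτ : ∀ᵐ ω ∂P, R ω < ⊤ → R ω < (τ ω : ℝ≥0∞) ∧ A (R ω).toNNReal ω = A (τ ω) ω)
    (s t : ℝ≥0) (hst : s ≤ t) :
    P ({ω | R ω ≤ (s : ℝ≥0∞)} ∩ {ω | s < τ ω ∧ τ ω ≤ t}) = 0 := by
  set f : ℝ≥0 → Ω → ℝ := fun t ω => (if τ ω ≤ t then (1 : ℝ) else 0) - A (min t (τ ω)) ω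
  have hτ_meas : Measurable τ :=
    measurable_of_Iic fun i => by
      have := F.le i _ (hτ.measurableSet_le i)
      simp only [WithTop.coe_le_coe] at this
      exact this
  set B : Set Ω := {ω | R ω ≤ (s : ℝ≥0∞)}
  have hB : MeasurableSet B := F.le s _ (hR s)
  set C : Set Ω := {ω | s < τ ω ∧ τ ω ≤ t}
  have hC : MeasurableSet C := hτ_meas measurableSet_Ioc
  -- martingale property on B
  have hint : ∫ ω in B, f s ω ∂P = ∫ ω in B, f t ω ∂P :=
    hM.setIntegral_eq hst (hR s)
  have hdiff : ∫ ω in B, (f t ω - f s ω) ∂P = 0 := by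
    rw [integral_sub ((hM.integrable t).integrableOn) ((hM.integrable s).integrableOn), hint,
      sub_self]
  -- a.e. on B, the difference equals the indicator of C
  have hcong : ∫ ω in B, (f t ω - f s ω) ∂P = ∫ ω in B, C.indicator (fun _ => (1 : ℝ)) ω ∂P := by
    refine setIntegral_congr_ae hB ?_
    filter_upwards [hRτ] with ω hω hωB
    have hRfin : R ω < ⊤ := lt_of_le_of_lt hωB (by simp)
    obtain ⟨hRlt, hAeq⟩ := hω hRfin
    -- A is constant between R and τ
    have hR' : (R ω).toNNReal ≤ s := by
      have := (ENNReal.toNNReal_le_toNNReal (ne_of_lt hRfin) (by simp)).2 hωB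
      simpa using this
    have hRτ' : (R ω).toNNReal ≤ τ ω := by
      have h := le_of_lt hRlt
      have := (ENNReal.toNNReal_le_toNNReal (ne_of_lt hRfin) (by simp)).2 h
      simpa using this
    have hAconst : ∀ u : ℝ≥0, (R ω).toNNReal ≤ u → u ≤ τ ω → A u ω = A (τ ω) ω := by
      intro u h1 h2
      refine le_antisymm (hA_mono ω h2) ?_
      calc A (τ ω) ω = A (R ω).toNNReal ω := hAeq.symm
        _ ≤ A u ω := hA_mono ω h1
    have hAs : A (min s (τ ω)) ω = A (τ ω) ω :=
      hAconst _ (le_min hR' hRτ') (min_le_right _ _)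
    have hAt : A (min t (τ ω)) ω = A (τ ω) ω :=
      hAconst _ (le_min (hR'.trans hst) hRτ') (min_le_right _ _)
    simp only [f, hAs, hAt]
    rw [Set.indicator_apply]
    by_cases h2 : τ ω ≤ s
    · have h1 : τ ω ≤ t := h2.trans hst
      have hc : ¬ (s < τ ω ∧ τ ω ≤ t) := fun h => absurd h2 (not_le.2 h.1)
      simp [h1, h2, hc, not_lt.2 h2, C, Set.mem_setOf_eq]
    · by_cases h1 : τ ω ≤ t
      · have hc : s < τ ω := lt_of_not_ge h2
        simp [h1, h2, hc, C, Set.mem_setOf_eq]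
      · have hc : ¬ (s < τ ω ∧ τ ω ≤ t) := fun h => h1 h.2
        simp [h1, h2, hc, C, Set.mem_setOf_eq]
  have hind : ∫ ω in B, C.indicator (fun _ => (1 : ℝ)) ω ∂P = (P (B ∩ C)).toReal := by
    rw [setIntegral_indicator hC]
    simp [Measure.restrict_apply hC, Set.inter_comm, measureReal_def]
  have h0 : (P (B ∩ C)).toReal = 0 := by rw [← hind, ← hcong, hdiff]
  have hne : P (B ∩ C) ≠ ⊤ := measure_ne_top _ _
  exact (ENNReal.toReal_eq_zero_iff _).1 h0 |>.resolve_right hne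

/-- With the compensator setup (the process
`M t = 1_{t ≥ τ} - A_{t ∧ τ}` is a martingale, `A` continuous nondecreasing, `A 0 = 0`,
`P(τ > 0) = 1`, `τ` a.s. finite, here `ℝ≥0`-valued), let `R` be a `[0, ∞]`-valued
stopping time such that, a.s. on `{R < ∞}`, one has `R < τ` and `A_R = A_τ`.
Then `P(R < ∞) = 0`. -/
theorem no_finite_stopping_time_before_tau_with_equal_compensator
    {Ω : Type*} {m0 : MeasurableSpace Ω} {P : Measure Ω} [IsProbabilityMeasure P]
    (F : Filtration ℝ≥0 m0) (τ : Ω → ℝ≥0) (A : ℝ≥0 → Ω → ℝ)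
    (hτ : IsStoppingTime F (fun ω => (τ ω : WithTop ℝ≥0)))
    (hτ_pos : P {ω | 0 < τ ω} = 1)
    (hA_adapted : Adapted F A)
    (hA_cont : ∀ ω, Continuous fun t => A t ω)
    (hA_mono : ∀ ω, Monotone fun t => A t ω)
    (hA_zero : ∀ ω, A 0 ω = 0)
    (hM : Martingale (fun t ω => (if τ ω ≤ t then (1 : ℝ) else 0) - A (min t (τ ω)) ω) F P)
    (R : Ω → ℝ≥0∞)
    (hR : ∀ t : ℝ≥0, MeasurableSet[F t] {ω | R ω ≤ (t : ℝ≥0∞)})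
    (hRτ : ∀ᵐ ω ∂P, R ω < ⊤ → R ω < (τ ω : ℝ≥0∞) ∧ A (R ω).toNNReal ω = A (τ ω) ω) :
    P {ω | R ω < ⊤} = 0 := by
  -- null set where the hypothesis fails
  set N : Set Ω := {ω | ¬ (R ω < ⊤ → R ω < (τ ω : ℝ≥0∞) ∧ A (R ω).toNNReal ω = A (τ ω) ω)}
  have hN : P N = 0 := by
    rw [ae_iff] at hRτ; exact hRτ
  -- covering family indexed by rationals and naturals
  set S : ℚ → ℕ → Set Ω := fun q n =>
    {ω | R ω ≤ ((Real.toNNReal q : ℝ≥0) : ℝ≥0∞)} ∩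
      {ω | Real.toNNReal q < τ ω ∧ τ ω ≤ (n : ℝ≥0)}
  have hScover : {ω | R ω < ⊤} ⊆ N ∪ ⋃ (q : ℚ) (n : ℕ), S q n := by
    intro ω hω
    by_cases hωN : ω ∈ N
    · exact Or.inl hωN
    refine Or.inr ?_
    have hωg := not_not.1 hωN
    obtain ⟨hRlt, -⟩ := hωg hω
    -- find a rational q with R ω ≤ q < τ ω
    have hlt : (R ω).toReal < (τ ω : ℝ) := by
      have h1 : (R ω).toReal < ((τ ω : ℝ≥0∞)).toReal :=
        ENNReal.toReal_strict_mono (by simp) hRlt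
      simpa using h1
    obtain ⟨q, hq1, hq2⟩ := exists_rat_btwn hlt
    have hq0 : (0 : ℝ) ≤ (q : ℝ) := le_trans ENNReal.toReal_nonneg hq1.le
    refine Set.mem_iUnion.2 ⟨q, Set.mem_iUnion.2 ⟨⌈(τ ω : ℝ)⌉₊, ?_, ?_, ?_⟩⟩
    · -- R ω ≤ q
      show R ω ≤ ((Real.toNNReal q : ℝ≥0) : ℝ≥0∞)
      rw [← ENNReal.ofReal_coe_nnreal]
      simp only [Real.coe_toNNReal _ hq0]
      rw [← ENNReal.ofReal_toReal (ne_of_lt hω)]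
      exact ENNReal.ofReal_le_ofReal hq1.le
    · -- q < τ ω
      show Real.toNNReal q < τ ω
      rw [← NNReal.coe_lt_coe]
      rw [Real.coe_toNNReal _ hq0]
      exact hq2
    · -- τ ω ≤ n
      show τ ω ≤ ((⌈(τ ω : ℝ)⌉₊ : ℕ) : ℝ≥0)
      have := Nat.le_ceil (τ ω : ℝ)
      exact_mod_cast this
  have hSnull : ∀ (q : ℚ) (n : ℕ), P (S q n) = 0 := by
    intro q n
    by_cases hqn : Real.toNNReal q ≤ (n : ℝ≥0)
    · exact aux_null_piece F τ A hτ hA_mono hM R hR hRτ _ _ hqn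
    · have : S q n = ∅ := by
        ext ω
        simp only [S, Set.mem_inter_iff, Set.mem_setOf_eq, Set.mem_empty_iff_false, iff_false]
        rintro ⟨-, h1, h2⟩
        exact hqn (le_trans h1.le h2)
      simp [this]
  have hU : P (⋃ (q : ℚ) (n : ℕ), S q n) = 0 := by
    refine measure_iUnion_null fun q => measure_iUnion_null fun n => hSnull q n
  refine le_antisymm ?_ zero_le
  calc P {ω | R ω < ⊤} ≤ P (N ∪ ⋃ (q : ℚ) (n : ℕ), S q n) := measure_mono hScover
    _ ≤ P N + P (⋃ (q : ℚ) (n : ℕ), S q n) := measure_union_le _ _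
    _ = 0 := by rw [hN, hU, add_zero]
end

section
/- Let τ : Ω → (0, ∞] be a predictable stopping time announced by a sequence of stopping times (τ_n)_{n≥1}, i.e. τ_n ≤ τ_{n+1} for all n, τ_n < τ almost surely on {τ > 0}, and τ_n → τ almost surely. Then there exists a stochastic process Y = (Y_t)_{t≥0} such that, almost surely: t ↦ Y_t(ω) is continuous on [0, ∞), Y_t(ω) > 0 for all t < τ(ω), Y_t(ω) = 0 for all t ≥ τ(ω), and hence τ(ω) = inf{t ≥ 0 : Y_t(ω) = 0}. Moreover each Y_t is measurable with respect to σ(τ_1, τ_2, …). -/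
open MeasureTheory ProbabilityTheory Filter Set
open scoped NNReal ENNReal

/-- Let `τ : Ω → (0, ∞]` be a predictable stopping time announced by
a sequence of stopping times `(τ_n)`: `τ_n ≤ τ_{n+1}`, `τ_n < τ` a.s. on `{τ > 0}`, and
`τ_n → τ` a.s.  Then there is a process `Y` such that almost surely: `t ↦ Y t ω` is
continuous on `[0, ∞)`, `Y t ω > 0` for `t < τ ω`, `Y t ω = 0` for `t ≥ τ ω`, and hence
`τ ω = inf {t ≥ 0 : Y t ω = 0}` (an infimum in `ℝ≥0∞`).  Moreover each `Y t` is
measurable with respect to `σ(τ_1, τ_2, …)`. -/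
theorem predictable_time_is_hitting_time_of_continuous_process
    {Ω : Type*} {m0 : MeasurableSpace Ω} {P : Measure Ω} [IsProbabilityMeasure P]
    (F : Filtration ℝ≥0∞ m0) (τ : Ω → ℝ≥0∞) (τn : ℕ → Ω → ℝ≥0∞)
    (hτ : IsStoppingTime F (fun ω => (τ ω : WithTop ℝ≥0∞))) (hτ_pos : ∀ ω, 0 < τ ω)
    (hτn : ∀ n, IsStoppingTime F (fun ω => (τn n ω : WithTop ℝ≥0∞)))
    (hτn_mono : ∀ n ω, τn n ω ≤ τn (n + 1) ω)
    (hτn_lt : ∀ᵐ ω ∂P, 0 < τ ω → ∀ n, τn n ω < τ ω)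
    (hτn_tendsto : ∀ᵐ ω ∂P, Tendsto (fun n => τn n ω) atTop (nhds (τ ω))) :
    ∃ Y : ℝ≥0 → Ω → ℝ,
      (∀ᵐ ω ∂P,
        Continuous (fun t : ℝ≥0 => Y t ω) ∧
        (∀ t : ℝ≥0, (t : ℝ≥0∞) < τ ω → 0 < Y t ω) ∧
        (∀ t : ℝ≥0, τ ω ≤ (t : ℝ≥0∞) → Y t ω = 0) ∧
        sInf ((fun r : ℝ≥0 => (r : ℝ≥0∞)) '' {t : ℝ≥0 | Y t ω = 0}) = τ ω) ∧
      (∀ t : ℝ≥0,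
        Measurable[⨆ n, MeasurableSpace.comap (τn n) inferInstance] (Y t)) := by
  classical
  set M : MeasurableSpace Ω := ⨆ n, MeasurableSpace.comap (τn n) inferInstance with hM
  -- the "sup of the announcing sequence", measurable w.r.t. σ(τ₁, τ₂, …)
  set σ : Ω → ℝ≥0∞ := fun ω => ⨆ n, τn n ω with hσdef
  have hτn_meas : ∀ n, Measurable[M] (τn n) := fun n =>
    measurable_iff_comap_le.mpr (le_iSup (fun n => MeasurableSpace.comap (τn n) inferInstance) n)
  have hσ_meas : Measurable[M] σ := Measurable.iSup hτn_meas
  -- σ = τ almost surely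
  have hσ_eq : ∀ᵐ ω ∂P, σ ω = τ ω := by
    filter_upwards [hτn_tendsto] with ω hω
    have hmono : Monotone fun n => τn n ω := monotone_nat_of_le_succ fun n => hτn_mono n ω
    exact tendsto_nhds_unique (tendsto_atTop_iSup hmono) hω
  refine ⟨fun t ω => max 0 ((min (σ ω) ((t : ℝ≥0∞) + 1)).toReal - (t : ℝ)), ?_, ?_⟩
  · filter_upwards [hσ_eq] with ω hω
    have hpos : ∀ t : ℝ≥0, (t : ℝ≥0∞) < τ ω →
        0 < max 0 ((min (σ ω) ((t : ℝ≥0∞) + 1)).toReal - (t : ℝ)) := by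
      intro t ht
      have ht1 : (t : ℝ≥0∞) < (t : ℝ≥0∞) + 1 :=
        ENNReal.lt_add_right ENNReal.coe_ne_top one_ne_zero
      have hlt : (t : ℝ≥0∞) < min (σ ω) ((t : ℝ≥0∞) + 1) := lt_min (hω ▸ ht) ht1
      have hne : min (σ ω) ((t : ℝ≥0∞) + 1) ≠ ∞ := by
        refine ne_top_of_le_ne_top ?_ (min_le_right _ _)
        simp
      have : (t : ℝ) < (min (σ ω) ((t : ℝ≥0∞) + 1)).toReal := by
        have := (ENNReal.toReal_lt_toReal ENNReal.coe_ne_top hne).mpr hlt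
        simpa using this
      exact lt_max_of_lt_right (by linarith)
    have hzero : ∀ t : ℝ≥0, τ ω ≤ (t : ℝ≥0∞) →
        max 0 ((min (σ ω) ((t : ℝ≥0∞) + 1)).toReal - (t : ℝ)) = 0 := by
      intro t ht
      have hle : σ ω ≤ (t : ℝ≥0∞) := hω ▸ ht
      have hmin : min (σ ω) ((t : ℝ≥0∞) + 1) = σ ω :=
        min_eq_left (hle.trans (le_add_right le_rfl))
      have : (σ ω).toReal ≤ (t : ℝ) := by
        have := ENNReal.toReal_le_toReal (ne_top_of_le_ne_top ENNReal.coe_ne_top hle)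
          ENNReal.coe_ne_top |>.mpr hle
        simpa using this
      rw [hmin]
      exact max_eq_left (by linarith)
    refine ⟨?_, hpos, hzero, ?_⟩
    · -- continuity
      by_cases hfin : σ ω = ∞
      · have : (fun t : ℝ≥0 => max 0 ((min (σ ω) ((t : ℝ≥0∞) + 1)).toReal - (t : ℝ)))
            = fun _ : ℝ≥0 => (1 : ℝ) := by
          funext t
          rw [hfin, min_eq_right le_top,
            ENNReal.toReal_add ENNReal.coe_ne_top ENNReal.one_ne_top]
          simp
        rw [this]
        exact continuous_const
      · have : (fun t : ℝ≥0 => max 0 ((min (σ ω) ((t : ℝ≥0∞) + 1)).toReal - (t : ℝ)))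
            = fun t : ℝ≥0 => max 0 (min ((σ ω).toReal) ((t : ℝ) + 1) - t) := by
          funext t
          rw [ENNReal.toReal_min hfin (by simp),
            ENNReal.toReal_add ENNReal.coe_ne_top ENNReal.one_ne_top]
          simp
        rw [this]
        exact continuous_const.max
          ((continuous_const.min ((NNReal.continuous_coe).add continuous_const)).sub
            NNReal.continuous_coe)
    · -- the hitting set is exactly {t | τ ω ≤ t}
      have hset : {t : ℝ≥0 | max 0 ((min (σ ω) ((t : ℝ≥0∞) + 1)).toReal - (t : ℝ)) = 0}
          = {t : ℝ≥0 | τ ω ≤ (t : ℝ≥0∞)} := by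
        ext t
        simp only [Set.mem_setOf_eq]
        constructor
        · intro h
          by_contra hlt
          push_neg at hlt
          exact absurd h (ne_of_gt (hpos t hlt))
        · exact hzero t
      rw [hset]
      refine le_antisymm ?_ (le_sInf ?_)
      · by_cases hfin : τ ω = ∞
        · rw [hfin]; exact le_top
        · refine sInf_le ⟨(τ ω).toNNReal, ?_, ENNReal.coe_toNNReal hfin⟩
          simp [ENNReal.coe_toNNReal hfin]
      · rintro b ⟨t, ht, rfl⟩
        exact ht
  · intro t
    exact measurable_const.max
      (((hσ_meas.min measurable_const).ennreal_toReal).sub measurable_const)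
end
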